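/- arXiv:1602.02632 — 10 statements merged into one kernel-verified Lean document; each statement's English description precedes it below -/
import Mathlib

section
/- For every prime p > 2, the binomial coefficient C(2p-1, p-1) is congruent to 1 modulo p^2. -/
/-!
Vandermonde's identity writes `C(2p, p)` as `∑ C(p, i) C(p, p - i)`. For `0 < i < p` both factors
are divisible by `p`, so modulo `p²` only the two end terms survive and `C(2p, p) ≡ 2`. Since
`C(2p, p) = 2 C(2p - 1, p - 1)` and `2` is invertible modulo `p²` for odd `p`, the theorem follows.
-/

open Finset

namespace Nat

theorem centralBinom_succ_eq_two_mul_choose (n : ℕ) :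
    centralBinom (n + 1) = 2 * (2 * n + 1).choose n := by
  rw [centralBinom_eq_two_mul_choose, two_mul, ← add_assoc, choose_succ_succ' (n + 1 + n) n,
    choose_symm_add, ← two_mul, two_mul n, add_right_comm]

theorem Prime.centralBinom_modEq_two {p : ℕ} (hp : p.Prime) : centralBinom p ≡ 2 [MOD p ^ 2] := by
  obtain ⟨n, rfl⟩ : ∃ n, p = n + 2 := ⟨p - 2, by have := hp.two_le; omega⟩
  have hinner : (n + 2) ^ 2 ∣
      ∑ ij ∈ antidiagonal n, (n + 2).choose (ij.1 + 1) * (n + 2).choose (ij.2 + 1) := by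
    refine dvd_sum fun ij hij => ?_
    rw [HasAntidiagonal.mem_antidiagonal] at hij
    rw [sq]
    exact mul_dvd_mul (hp.dvd_choose_self (by omega) (by omega))
      (hp.dvd_choose_self (by omega) (by omega))
  have hsplit : centralBinom (n + 2) =
      ∑ ij ∈ antidiagonal n, (n + 2).choose (ij.1 + 1) * (n + 2).choose (ij.2 + 1) + 2 := by
    rw [centralBinom_eq_two_mul_choose, two_mul, add_choose_eq, Nat.sum_antidiagonal_succ,
      Nat.sum_antidiagonal_succ']
    simp only [choose_zero_right, choose_self, mul_one]
    ring
  rw [hsplit]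
  simpa using (modEq_zero_iff_dvd.2 hinner).add_right 2

end Nat

theorem babbage (p : ℕ) (hp : p.Prime) (h : 2 < p) :
    Nat.choose (2*p - 1) (p - 1) ≡ 1 [MOD p^2] := by
  have hcop : Nat.Coprime (p ^ 2) 2 :=
    ((Nat.coprime_primes hp Nat.prime_two).2 (by omega)).pow_left 2
  have hcentral := hp.centralBinom_modEq_two
  obtain ⟨n, rfl⟩ : ∃ n, p = n + 1 := ⟨p - 1, by omega⟩
  rw [Nat.centralBinom_succ_eq_two_mul_choose] at hcentral
  rw [show 2 * (n + 1) - 1 = 2 * n + 1 by omega, Nat.add_sub_cancel]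
  exact Nat.ModEq.cancel_left_of_coprime hcop (by simpa using hcentral)
end

section
/- For every prime p > 3, the binomial coefficient C(2p-1, p-1) is congruent to 1 modulo p^3. -/
/-!
Work in `R = ZMod (p ^ 3)`, where `C = C(2p-1, p-1) = ∏_{k=1}^{p-1} (1 + p/k)`. Multiplying this
product by itself with `k` replaced by `p - k`, and using `1/k + 1/(p-k) = p/(k(p-k))`, each pair
of factors becomes `1 + 2p²/(k(p-k))`; as `(p²)² = 0` in `R`, this gives
`C² = 1 + 2p² ∑ 1/(k(p-k))`. Modulo `p` the sum is `-∑ 1/k² = -∑_{x ∈ 𝔽_p} x² = 0` because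
`p - 1 ∤ 2`, so `C² = 1`. Finally `C - 1` is nilpotent (it is divisible by `p`) and
`C + 1 = 2 + (C - 1)` is a unit, so `(C - 1)(C + 1) = 0` forces `C = 1`.
-/

open Finset

theorem Finset.prod_one_add_mul_of_mul_self_eq_zero {ι R : Type*} [CommRing R] {ε : R}
    (hε : ε * ε = 0) (y : ι → R) (s : Finset ι) :
    ∏ i ∈ s, (1 + ε * y i) = 1 + ε * ∑ i ∈ s, y i := by
  classical
  induction s using Finset.induction_on with
  | empty => simp
  | insert a s ha ih =>
    rw [prod_insert ha, sum_insert ha, ih]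
    linear_combination (y a * ∑ i ∈ s, y i) * hε

theorem one_add_mul_mul_one_add_mul_of_mul_eq_one {R : Type*} [CommRing R] {a a' b b' : R}
    (ha : a * a' = 1) (hb : b * b' = 1) :
    (1 + (a + b) * a') * (1 + (a + b) * b') = 1 + 2 * (a + b) ^ 2 * (a' * b') := by
  linear_combination (-a * b' - 1 - 2 * (b * b' - 1)) * ha + (-b * a' - 1) * hb

theorem IsNilpotent.prod_one_add_mul_sub_one {ι R : Type*} [CommRing R] {q : R}
    (hq : IsNilpotent q) (u : ι → R) (s : Finset ι) :
    IsNilpotent (∏ i ∈ s, (1 + q * u i) - 1) := by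
  rw [← mem_nilradical, ← Ideal.Quotient.eq_zero_iff_mem, map_sub, map_prod, map_one]
  simp [Ideal.Quotient.eq_zero_iff_mem.mpr (mem_nilradical.mpr hq)]

theorem eq_one_of_sq_eq_one_of_isNilpotent_sub_one {R : Type*} [CommRing R]
    (h2 : IsUnit (2 : R)) {x : R} (hx : x ^ 2 = 1) (hnil : IsNilpotent (x - 1)) : x = 1 := by
  have hunit : IsUnit (x + 1) := by
    rw [show x + 1 = 2 + (x - 1) by ring]
    exact hnil.isUnit_add_left_of_commute h2 (Commute.all _ _)
  have hzero : (x - 1) * (x + 1) = 0 := by linear_combination hx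
  exact sub_eq_zero.mp (hunit.mul_left_eq_zero.mp hzero)

theorem Nat.sub_mem_Ico_one {p k : ℕ} (hk : k ∈ Ico 1 p) : p - k ∈ Ico 1 p := by
  simp only [mem_Ico] at hk ⊢
  omega

section Products

variable {R : Type*} [CommRing R] {p : ℕ} (v : ℕ → R)

theorem Nat.cast_choose_two_mul_sub_one_eq_prod (hv : ∀ k ∈ Ico 1 p, (k : R) * v k = 1) :
    ((2 * p - 1).choose (p - 1) : R) = ∏ k ∈ Ico 1 p, (1 + p * v k) := by
  rcases p.eq_zero_or_pos with rfl | hp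
  · simp
  have hfact : ((p - 1).factorial : R) = ∏ k ∈ Ico 1 p, (k : R) := by
    rw [← prod_Ico_id_eq_factorial, Nat.sub_add_cancel hp, Nat.cast_prod]
  have hasc : (p - 1).factorial * (2 * p - 1).choose (p - 1) = ∏ k ∈ Ico 1 p, (p + k) := by
    rw [show 2 * p - 1 = p + (p - 1) by omega, ← Nat.ascFactorial_eq_factorial_mul_choose,
      Nat.ascFactorial_eq_prod_range, prod_Ico_eq_prod_range]
    simp only [add_assoc, add_comm 1]
  have hunit : IsUnit ((p - 1).factorial : R) :=
    hfact ▸ IsUnit.of_mul_eq_one (∏ k ∈ Ico 1 p, v k)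
      (prod_mul_distrib.symm.trans (prod_eq_one hv))
  refine hunit.mul_left_cancel ?_
  rw [← Nat.cast_mul, hasc, hfact, ← prod_mul_distrib]
  push_cast
  refine prod_congr rfl fun k hk => ?_
  linear_combination -(p : R) * hv k hk

theorem prod_Ico_one_add_mul_sq (hp3 : (p : R) ^ 3 = 0)
    (hv : ∀ k ∈ Ico 1 p, (k : R) * v k = 1) :
    (∏ k ∈ Ico 1 p, (1 + p * v k)) ^ 2 =
      1 + 2 * p ^ 2 * ∑ k ∈ Ico 1 p, v k * v (p - k) := by
  have hreflect : ∏ k ∈ Ico 1 p, (1 + p * v k) = ∏ k ∈ Ico 1 p, (1 + p * v (p - k)) := by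
    simpa only [Nat.add_sub_cancel, Nat.add_sub_cancel_left] using
      (prod_Ico_reflect (fun j => 1 + (p : R) * v j) 1 (Nat.le_succ p)).symm
  have hpair : ∀ k ∈ Ico 1 p,
      (1 + p * v k) * (1 + p * v (p - k)) = 1 + 2 * (p : R) ^ 2 * (v k * v (p - k)) := by
    intro k hk
    have hsum : (k : R) + (p - k : ℕ) = p := by
      rw [← Nat.cast_add, Nat.add_sub_cancel' (mem_Ico.mp hk).2.le]
    simpa only [hsum] using
      one_add_mul_mul_one_add_mul_of_mul_eq_one (hv k hk) (hv _ (Nat.sub_mem_Ico_one hk))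
  have hε : 2 * (p : R) ^ 2 * (2 * (p : R) ^ 2) = 0 := by linear_combination 4 * (p : R) * hp3
  rw [sq]
  nth_rewrite 2 [hreflect]
  rw [← prod_mul_distrib, prod_congr rfl hpair, prod_one_add_mul_of_mul_self_eq_zero hε]

end Products

namespace ZMod

theorem sum_range_natCast {n : ℕ} [NeZero n] {M : Type*} [AddCommMonoid M] (f : ZMod n → M) :
    ∑ k ∈ range n, f k = ∑ x, f x :=
  sum_nbij' Nat.cast val (by simp) (by simp [val_lt])
    (fun _ hk => val_cast_of_lt (mem_range.mp hk)) (fun x _ => natCast_zmod_val x)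
    (fun _ _ => rfl)

theorem natCast_mul_eq_zero_of_castHom_eq_zero {m n N : ℕ} (hm : m ∣ N) (hN : N ∣ m * n)
    {x : ZMod N} (hx : castHom hm (ZMod m) x = 0) : (n : ZMod N) * x = 0 := by
  rw [← intCast_zmod_cast x] at hx ⊢
  rw [map_intCast, intCast_zmod_eq_zero_iff_dvd] at hx
  obtain ⟨t, ht⟩ := hx
  rw [ht, ← Int.cast_natCast, ← Int.cast_mul, intCast_zmod_eq_zero_iff_dvd]
  exact (Int.natCast_dvd_natCast.mpr hN).trans ⟨t, by push_cast; ring⟩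

theorem castHom_inv_natCast {m N : ℕ} [Fact m.Prime] (hm : m ∣ N) {k : ℕ}
    (hk : k.Coprime N) : castHom hm (ZMod m) (k : ZMod N)⁻¹ = (k : ZMod m)⁻¹ :=
  eq_inv_of_mul_eq_one_left <| by
    rw [← map_natCast (castHom hm (ZMod m)) k, ← map_mul, mul_comm,
      coe_mul_inv_eq_one k hk, map_one]

variable {p : ℕ} [Fact p.Prime]

theorem sum_inv_sq (hp : 3 < p) : ∑ x : ZMod p, x⁻¹ ^ 2 = 0 := by
  rw [Fintype.sum_equiv (Equiv.inv (ZMod p)) (fun x => x⁻¹ ^ 2) (· ^ 2) fun _ => rfl]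
  exact FiniteField.sum_pow_lt_card_sub_one (ZMod p) 2 (by rw [card]; omega)

theorem sum_Ico_inv_mul_inv_sub (hp : 3 < p) :
    ∑ k ∈ Ico 1 p, (k : ZMod p)⁻¹ * ((p - k : ℕ) : ZMod p)⁻¹ = 0 := by
  have hterm : ∀ k ∈ Ico 1 p,
      (k : ZMod p)⁻¹ * ((p - k : ℕ) : ZMod p)⁻¹ = -(k : ZMod p)⁻¹ ^ 2 := by
    intro k hk
    rw [Nat.cast_sub (mem_Ico.mp hk).2.le, natCast_self, zero_sub, inv_neg]
    ring
  rw [sum_congr rfl hterm, sum_neg_distrib, neg_eq_zero, ← sum_inv_sq hp,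
    ← sum_range_natCast, sum_range_eq_add_Ico _ (by omega)]
  simp

end ZMod

theorem wolstenholme (p : ℕ) (hp : p.Prime) (h : 3 < p) :
    Nat.choose (2*p - 1) (p - 1) ≡ 1 [MOD p^3] := by
  have := Fact.mk hp
  have hcop : ∀ k ∈ Ico 1 p, k.Coprime (p ^ 3) := fun k hk => by
    obtain ⟨hk1, hkp⟩ := mem_Ico.mp hk
    exact ((Nat.coprime_of_lt_prime (by omega) hkp hp).pow_left 3).symm
  have hv : ∀ k ∈ Ico 1 p, (k : ZMod (p ^ 3)) * (k : ZMod (p ^ 3))⁻¹ = 1 :=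
    fun k hk => ZMod.coe_mul_inv_eq_one k (hcop k hk)
  have hp3 : (p : ZMod (p ^ 3)) ^ 3 = 0 := by rw [← Nat.cast_pow, ZMod.natCast_self]
  have hsum : (p : ZMod (p ^ 3)) ^ 2 *
      ∑ k ∈ Ico 1 p, (k : ZMod (p ^ 3))⁻¹ * ((p - k : ℕ) : ZMod (p ^ 3))⁻¹ = 0 := by
    rw [← Nat.cast_pow]
    refine ZMod.natCast_mul_eq_zero_of_castHom_eq_zero (dvd_pow_self p three_ne_zero)
      (dvd_of_eq (by ring)) ?_
    rw [map_sum, ← ZMod.sum_Ico_inv_mul_inv_sub h]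
    refine sum_congr rfl fun k hk => ?_
    rw [map_mul, ZMod.castHom_inv_natCast _ (hcop k hk),
      ZMod.castHom_inv_natCast _ (hcop _ (Nat.sub_mem_Ico_one hk))]
  have h2 : IsUnit (2 : ZMod (p ^ 3)) := by
    exact_mod_cast (ZMod.isUnit_iff_coprime 2 (p ^ 3)).mpr
      (((Nat.coprime_primes Nat.prime_two hp).mpr (by omega)).pow_right 3)
  rw [← ZMod.natCast_eq_natCast_iff, Nat.cast_one, Nat.cast_choose_two_mul_sub_one_eq_prod _ hv]
  refine eq_one_of_sq_eq_one_of_isNilpotent_sub_one h2 ?_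
    (IsNilpotent.prod_one_add_mul_sub_one ⟨3, hp3⟩ _ _)
  rw [prod_Ico_one_add_mul_sq _ hp3 hv]
  linear_combination 2 * hsum
end

section
/- For every prime p > 3, p^3 divides 2 - C(2p, p). -/
/-!
Vandermonde's identity gives `C(2p, p) = 2 + ∑_{0<k<p} C(p, k)²`. Each `C(p, k)` with `0 < k < p`
is `p` times an integer `c_k`, and `k c_k = C(p-1, k-1) ≡ (-1)^(k-1) (mod p)`, so
`∑ c_k² ≡ ∑ k⁻² ≡ ∑_{x ∈ 𝔽_p} x² ≡ 0 (mod p)` as soon as `p - 1 ∤ 2`, that is `p > 3`.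
-/

open Finset

theorem Nat.choose_two_mul_self_eq_two_add {n : ℕ} (hn : 0 < n) :
    (2 * n).choose n = 2 + ∑ k ∈ Ico 1 n, n.choose k ^ 2 := by
  rw [← Nat.sum_range_choose_sq, sum_range_succ, sum_range_eq_add_Ico _ hn]
  simp only [Nat.choose_zero_right, Nat.choose_self]
  ring

theorem ZMod.sum_range_natCast_s2 {n : ℕ} [NeZero n] {M : Type*} [AddCommMonoid M]
    (f : ZMod n → M) : ∑ k ∈ range n, f k = ∑ x : ZMod n, f x :=
  sum_nbij' (↑) ZMod.val (fun _ _ => mem_univ _) (fun x _ => mem_range.2 x.val_lt)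
    (fun _ hk => ZMod.val_cast_of_lt (mem_range.1 hk)) (fun x _ => ZMod.natCast_zmod_val x)
    (fun _ _ => rfl)

theorem ZMod.sum_Ico_one_inv_pow {p i : ℕ} [Fact p.Prime] (hi0 : 0 < i) (hi : i < p - 1) :
    ∑ k ∈ Ico 1 p, (k : ZMod p)⁻¹ ^ i = 0 := by
  calc ∑ k ∈ Ico 1 p, (k : ZMod p)⁻¹ ^ i
      = ∑ k ∈ range p, (k : ZMod p)⁻¹ ^ i := by
        rw [sum_range_eq_add_Ico _ (Fact.out : p.Prime).pos]
        simp [hi0.ne']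
    _ = ∑ x : ZMod p, x⁻¹ ^ i := ZMod.sum_range_natCast_s2 (· ⁻¹ ^ i)
    _ = ∑ x : ZMod p, x ^ i := Equiv.sum_comp (Equiv.inv (ZMod p)) (· ^ i)
    _ = 0 := FiniteField.sum_pow_lt_card_sub_one (K := ZMod p) i (by rwa [ZMod.card])

namespace Nat.Prime

variable {p : ℕ}

theorem cast_choose_sub_one (hp : p.Prime) {k : ℕ} (hk : k < p) :
    ((p - 1).choose k : ZMod p) = (-1) ^ k := by
  induction k with
  | zero => simp
  | succ k ih =>
    have hpascal : p.choose (k + 1) = (p - 1).choose k + (p - 1).choose (k + 1) := by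
      rw [← Nat.choose_succ_succ', Nat.sub_add_cancel hp.one_le]
    have hzero : (p.choose (k + 1) : ZMod p) = 0 :=
      (ZMod.natCast_eq_zero_iff _ _).2 (hp.dvd_choose_self k.succ_ne_zero hk)
    rw [hpascal, Nat.cast_add, ih (by omega)] at hzero
    linear_combination hzero

theorem cast_choose_div_self_mul (hp : p.Prime) {k : ℕ} (hk0 : 0 < k) (hk : k < p) :
    ((p.choose k / p : ℕ) : ZMod p) * k = (-1) ^ (k - 1) := by
  have hmul : p * (p.choose k / p * k) = p * (p - 1).choose (k - 1) := by
    have := Nat.add_one_mul_choose_eq (p - 1) (k - 1)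
    rw [Nat.sub_add_cancel hp.one_le, Nat.sub_add_cancel hk0] at this
    rw [← mul_assoc, Nat.mul_div_cancel' (hp.dvd_choose_self hk0.ne' hk), this]
  rw [← Nat.cast_mul, Nat.eq_of_mul_eq_mul_left hp.pos hmul, hp.cast_choose_sub_one (by omega)]

theorem pow_three_dvd_sum_Ico_choose_sq (hp : p.Prime) (h : 3 < p) :
    p ^ 3 ∣ ∑ k ∈ Ico 1 p, p.choose k ^ 2 := by
  have := Fact.mk hp
  have hfactor : ∑ k ∈ Ico 1 p, p.choose k ^ 2 = p ^ 2 * ∑ k ∈ Ico 1 p, (p.choose k / p) ^ 2 := by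
    rw [mul_sum]
    refine sum_congr rfl fun k hk => ?_
    obtain ⟨hk0, hk⟩ := mem_Ico.1 hk
    rw [← mul_pow, Nat.mul_div_cancel' (hp.dvd_choose_self (by omega) hk)]
  have hreduced : p ∣ ∑ k ∈ Ico 1 p, (p.choose k / p) ^ 2 := by
    rw [← ZMod.natCast_eq_zero_iff, Nat.cast_sum]
    calc ∑ k ∈ Ico 1 p, (((p.choose k / p) ^ 2 : ℕ) : ZMod p)
        = ∑ k ∈ Ico 1 p, (k : ZMod p)⁻¹ ^ 2 := sum_congr rfl fun k hk => by
          obtain ⟨hk0, hk⟩ := mem_Ico.1 hk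
          have hk_ne : (k : ZMod p) ≠ 0 := by
            rw [Ne, ZMod.natCast_eq_zero_iff]
            exact Nat.not_dvd_of_pos_of_lt hk0 hk
          rw [Nat.cast_pow, (eq_mul_inv_iff_mul_eq₀ hk_ne).2 (hp.cast_choose_div_self_mul hk0 hk),
            mul_pow, ← pow_mul, pow_mul', neg_one_sq, one_pow, one_mul]
      _ = 0 := ZMod.sum_Ico_one_inv_pow two_pos (by omega)
  rw [hfactor, pow_succ]
  exact mul_dvd_mul_left _ hreduced

end Nat.Prime

theorem stmt2 (p : ℕ) (hp : p.Prime) (h : 3 < p) :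
    (p : ℤ)^3 ∣ 2 - (Nat.choose (2*p) p : ℤ) := by
  rw [Nat.choose_two_mul_self_eq_two_add hp.pos, Nat.cast_add, Nat.cast_ofNat, sub_add_cancel_left,
    dvd_neg]
  exact_mod_cast hp.pow_three_dvd_sum_Ico_choose_sq h
end

section
/- For every prime p > 5, p^5 divides 12 - 9*C(2p, p) + 2*C(3p, p). -/
/-!
Let `P(x) = (x + 1)(x + 2) ⋯ (x + p - 1)`, i.e. `P = taylor 1 (ascPochhammer ℤ (p - 1))`.
Then `(p - 1)! * C(2p, p) = 2 P(p)`, `(p - 1)! * C(3p, p) = 3 P(2p)` and `(p - 1)! = P(0)`, and since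
`p - 1` is even, `P(-p - x) = P(x)`. Hence `(p - 1)!` times `12 - 9 C(2p, p) + 2 C(3p, p)` is six
times the central fourth difference `P(2p) - 4 P(p) + 6 P(0) - 4 P(-p) + P(-2p)`.
For any polynomial this difference is `24 p⁴` times its coefficient of `x⁴`, modulo `p⁵`.
Finally `x P(x) = x (x + 1) ⋯ (x + p - 1) ≡ x^p - x` modulo `p`, so for `p > 5` the coefficient
of `x⁴` in `P` is divisible by `p`.
-/

open Polynomial

section FourthDifference

variable {R : Type*} [CommRing R]

def symmFourthDiff (f : R[X]) (h : R) : R :=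
  f.eval (2 * h) - 4 * f.eval h + 6 * f.eval 0 - 4 * f.eval (-h) + f.eval (-(2 * h))

lemma symmFourthDiff_add (f g : R[X]) (h : R) :
    symmFourthDiff (f + g) h = symmFourthDiff f h + symmFourthDiff g h := by
  simp only [symmFourthDiff, eval_add]
  ring

lemma pow_five_dvd_symmFourthDiff_X_pow_sub (h : R) (n : ℕ) :
    h ^ 5 ∣ symmFourthDiff (X ^ n) h - if n = 4 then 24 * h ^ 4 else 0 := by
  simp only [symmFourthDiff, eval_pow, eval_X]
  obtain hn | hn := lt_or_ge n 5
  · interval_cases n <;> ring_nf <;> simp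
  · obtain ⟨k, rfl⟩ := Nat.exists_eq_add_of_le hn
    rw [if_neg (by omega), zero_pow (by omega)]
    exact ⟨h ^ k * (2 ^ (5 + k) - 4 - 4 * (-1) ^ (5 + k) + (-2) ^ (5 + k)), by ring⟩

lemma pow_five_dvd_symmFourthDiff_sub (f : R[X]) (h : R) :
    h ^ 5 ∣ symmFourthDiff f h - 24 * h ^ 4 * f.coeff 4 := by
  induction f using Polynomial.induction_on' with
  | add f g hf hg =>
    rw [symmFourthDiff_add, coeff_add]
    convert dvd_add hf hg using 1
    ring
  | monomial n a =>
    convert (pow_five_dvd_symmFourthDiff_X_pow_sub h n).mul_left a using 1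
    simp only [symmFourthDiff, eval_monomial, eval_pow, eval_X, coeff_monomial]
    split_ifs <;> ring

lemma pow_five_dvd_symmFourthDiff {f : R[X]} {h : R} (hf : h ∣ f.coeff 4) :
    h ^ 5 ∣ symmFourthDiff f h := by
  obtain ⟨c, hc⟩ := hf
  have hcoeff : h ^ 5 ∣ 24 * h ^ 4 * f.coeff 4 := ⟨24 * c, by rw [hc]; ring⟩
  simpa using (pow_five_dvd_symmFourthDiff_sub f h).add hcoeff

end FourthDifference

lemma ascPochhammer_zmod_eq_X_pow_sub_X (p : ℕ) [Fact p.Prime] :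
    ascPochhammer (ZMod p) p = X ^ p - X := by
  have hp : 1 < p := (Fact.out : p.Prime).one_lt
  have hmonic : (X ^ p - X : (ZMod p)[X]).Monic := monic_X_pow_sub (by simpa using hp)
  have hdeg : (ascPochhammer (ZMod p) p).degree = (X ^ p - X : (ZMod p)[X]).degree := by
    rw [degree_eq_natDegree (monic_ascPochhammer _ _).ne_zero,
      degree_eq_natDegree (FiniteField.X_pow_card_sub_X_ne_zero _ hp), ascPochhammer_natDegree,
      FiniteField.X_pow_card_sub_X_natDegree_eq _ hp]
  refine eq_of_degree_sub_lt_of_eval_finset_eq Finset.univ ?_ fun x _ => ?_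
  · calc (ascPochhammer (ZMod p) p - (X ^ p - X)).degree < (ascPochhammer (ZMod p) p).degree :=
          degree_sub_lt_left hdeg (monic_ascPochhammer _ _).ne_zero
            (by rw [(monic_ascPochhammer _ _).leadingCoeff, hmonic.leadingCoeff])
      _ = Finset.univ.card := by
        rw [degree_eq_natDegree (monic_ascPochhammer _ _).ne_zero, ascPochhammer_natDegree,
          Finset.card_univ, ZMod.card]
  · have hx : x = -((-x).val : ZMod p) := by simp
    rw [hx, ascPochhammer_eval_neg_coe_nat_of_lt (ZMod.val_lt _)]
    simp [ZMod.pow_card]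

lemma prime_dvd_coeff_ascPochhammer {p k : ℕ} (hp : p.Prime) (hk1 : k ≠ 1) (hkp : k ≠ p) :
    (p : ℤ) ∣ (ascPochhammer ℤ p).coeff k := by
  have := Fact.mk hp
  rw [← ZMod.intCast_zmod_eq_zero_iff_dvd, ← eq_intCast (Int.castRingHom (ZMod p)), ← coeff_map,
    ascPochhammer_map, ascPochhammer_zmod_eq_X_pow_sub_X]
  simp [coeff_X, coeff_X_pow, hkp, Ne.symm hk1]

lemma X_mul_taylor_one_ascPochhammer (S : Type*) [CommSemiring S] (n : ℕ) :
    X * taylor 1 (ascPochhammer S n) = ascPochhammer S (n + 1) := by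
  rw [taylor_apply, C_1, ascPochhammer_succ_left]

lemma ascPochhammer_eval_neg_of_even {R : Type*} [Ring R] {n : ℕ} (hn : Even n) (r : R) :
    (ascPochhammer R n).eval (-r) = (ascPochhammer R n).eval (r - n + 1) := by
  rw [ascPochhammer_eval_neg_eq_descPochhammer, hn.neg_one_pow, one_mul,
    descPochhammer_eval_eq_ascPochhammer]

lemma choose_mul_mul_factorial_eq_ascPochhammer_eval (m : ℕ) {n : ℕ} (hn : n ≠ 0) :
    (((m + 1) * n).choose n * (n - 1).factorial : ℤ) =
      (m + 1) * (ascPochhammer ℤ (n - 1)).eval (((m * n : ℕ) : ℤ) + 1) := by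
  rw [← Nat.cast_add_one (m * n), ascPochhammer_nat_eq_natCast_ascFactorial,
    Nat.ascFactorial_eq_factorial_mul_choose, Nat.choose_mul_right hn,
    show (m + 1) * n - 1 = m * n + (n - 1) by grind]
  push_cast
  ring

lemma factorial_mul_eq_symmFourthDiff {p : ℕ} (hp : Odd p) :
    ((p - 1).factorial : ℤ) * (12 - 9 * ((2 * p).choose p : ℤ) + 2 * ((3 * p).choose p : ℤ))
      = 6 * symmFourthDiff (taylor 1 (ascPochhammer ℤ (p - 1))) p := by
  have heven : Even (p - 1) := Nat.Odd.sub_odd hp odd_one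
  have h1 := ascPochhammer_eval_one ℤ (p - 1)
  have h2 := choose_mul_mul_factorial_eq_ascPochhammer_eval 1 hp.pos.ne'
  have h3 := choose_mul_mul_factorial_eq_ascPochhammer_eval 2 hp.pos.ne'
  have r1 := ascPochhammer_eval_neg_of_even heven ((p : ℤ) - 1)
  have r2 := ascPochhammer_eval_neg_of_even heven (2 * (p : ℤ) - 1)
  simp only [symmFourthDiff, taylor_eval]
  push_cast [hp.pos] at h2 h3 r1 r2 ⊢
  linear_combination (norm := ring_nf) -9 * h2 + 2 * h3 + 24 * r1 - 6 * r2 - 12 * h1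

theorem stmt3 (p : ℕ) (hp : p.Prime) (h : 5 < p) :
    (p : ℤ)^5 ∣ 12 - 9 * (Nat.choose (2*p) p : ℤ) + 2 * (Nat.choose (3*p) p : ℤ) := by
  have hcoeff : (p : ℤ) ∣ (taylor 1 (ascPochhammer ℤ (p - 1))).coeff 4 := by
    rw [← coeff_X_mul, X_mul_taylor_one_ascPochhammer, Nat.sub_add_cancel hp.one_le]
    exact prime_dvd_coeff_ascPochhammer hp (by omega) (by omega)
  have hcop : IsCoprime ((p : ℤ) ^ 5) ((p - 1).factorial : ℤ) := by
    have : p.Coprime (p - 1).factorial :=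
      hp.coprime_iff_not_dvd.2 (by rw [hp.dvd_factorial]; omega)
    exact_mod_cast Nat.isCoprime_iff_coprime.2 (this.pow_left 5)
  refine hcop.dvd_of_dvd_mul_left ?_
  rw [factorial_mul_eq_symmFourthDiff (hp.odd_of_ne_two (by omega))]
  exact (pow_five_dvd_symmFourthDiff hcoeff).mul_left 6
end

section
/- For all integers a ≥ b ≥ 0 and every prime p > 3, C(a*p, b*p) is congruent to C(a, b) modulo p^3. -/
/-!
Write `(X + 1)^p = X^p + 1 + p E` with `E = ∑_{0<k<p} (C(p,k)/p) X^k`. By the binomial theorem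
`(X + 1)^(ap) = ∑_j C(a,j) p^j E^j (X^p + 1)^(a-j)`; compare coefficients of `X^(bp)`.
The `j = 0` term is `C(a,b)`. The `j = 1` term vanishes: `E` has no monomial of degree divisible
by `p`, and `(X^p + 1)^(a-1)` has only such monomials. For `j = 2` the only contribution of `E²` is
its coefficient of `X^p`, namely `∑_{0<i<p} (C(p,i)/p)²`; since `i · C(p,i)/p = C(p-1,i-1) ≡ ±1`,
this is `∑ i⁻² ≡ ∑ i² ≡ 0 (mod p)` as soon as `p > 3`. The terms with `j ≥ 3` carry `p³`.
-/

open Finset Polynomial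

theorem ZMod.sum_univ_eq_sum_range {M : Type*} [AddCommMonoid M] {n : ℕ} [NeZero n]
    (f : ZMod n → M) : ∑ x, f x = ∑ i ∈ range n, f i :=
  sum_nbij' ZMod.val Nat.cast (fun x _ => mem_range.2 (ZMod.val_lt x)) (fun _ _ => mem_univ _)
    (fun x _ => ZMod.natCast_zmod_val x) (fun _ hi => ZMod.val_natCast_of_lt (mem_range.1 hi))
    (fun x _ => by rw [ZMod.natCast_zmod_val])

theorem ZMod.sum_range_inv_sq_eq_zero {p : ℕ} [Fact p.Prime] (hp : 3 < p) :
    ∑ i ∈ range p, ((i : ZMod p)⁻¹) ^ 2 = 0 := by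
  rw [← ZMod.sum_univ_eq_sum_range (fun x => x⁻¹ ^ 2)]
  exact (Equiv.sum_comp (Equiv.inv (ZMod p)) (· ^ 2)).trans
    (FiniteField.sum_pow_lt_card_sub_one _ _ (by rw [ZMod.card]; omega))

theorem Nat.Prime.cast_choose_sub_one_s5 {p : ℕ} (hp : p.Prime) {k : ℕ} (hk : k < p) :
    ((p - 1).choose k : ZMod p) = (-1) ^ k := by
  induction k with
  | zero => simp
  | succ k ih =>
    have hpascal : (p - 1).choose k + (p - 1).choose (k + 1) = p.choose (k + 1) := by
      rw [← Nat.choose_succ_succ', Nat.sub_add_cancel hp.one_le]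
    have hzero : (p.choose (k + 1) : ZMod p) = 0 :=
      (ZMod.natCast_eq_zero_iff _ _).2 (hp.dvd_choose_self k.succ_ne_zero hk)
    rw [← hpascal, Nat.cast_add, ih (by omega)] at hzero
    linear_combination hzero

theorem Nat.Prime.choose_div_mul {p : ℕ} (hp : p.Prime) {i : ℕ} (hi0 : 0 < i) (hip : i < p) :
    p.choose i / p * i = (p - 1).choose (i - 1) := by
  have h := Nat.add_one_mul_choose_eq (p - 1) (i - 1)
  rw [Nat.sub_add_cancel hp.one_le, Nat.sub_add_cancel hi0,
    ← Nat.mul_div_cancel' (hp.dvd_choose_self hi0.ne' hip), mul_assoc] at h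
  exact (Nat.eq_of_mul_eq_mul_left hp.pos h).symm

theorem Nat.Prime.cast_choose_div_sq {p : ℕ} (hp : p.Prime) {i : ℕ} (hip : i < p) :
    ((p.choose i / p : ℕ) : ZMod p) ^ 2 = ((i : ZMod p)⁻¹) ^ 2 := by
  have := Fact.mk hp
  rcases Nat.eq_zero_or_pos i with rfl | hi0
  · simp [Nat.div_eq_of_lt hp.one_lt]
  have h := congrArg (fun m : ℕ => (m : ZMod p) ^ 2) (hp.choose_div_mul hi0 hip)
  simp only [Nat.cast_mul, hp.cast_choose_sub_one_s5 (show i - 1 < p by omega), mul_pow] at h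
  rw [← pow_mul, pow_mul', neg_one_sq, one_pow] at h
  rw [inv_pow, eq_inv_of_mul_eq_one_left h]

-- `E` of the header; the range includes `0` and `p`, where `C(p,k)/p = 0` for prime `p`.
noncomputable def binomialMiddle (p : ℕ) : ℤ[X] :=
  ∑ k ∈ range (p + 1), monomial k ((p.choose k / p : ℕ) : ℤ)

theorem coeff_binomialMiddle (p n : ℕ) : (binomialMiddle p).coeff n = (p.choose n / p : ℕ) := by
  rw [binomialMiddle, finsetSum_coeff]
  simp only [coeff_monomial]
  rw [sum_ite_eq', ite_eq_left_iff, mem_range]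
  intro hn
  simp [Nat.choose_eq_zero_of_lt (by omega : p < n)]

theorem X_add_one_pow_prime_eq {p : ℕ} (hp : p.Prime) :
    (X + 1 : ℤ[X]) ^ p = X ^ p + 1 + C (p : ℤ) * binomialMiddle p := by
  ext n
  simp only [coeff_add, coeff_X_add_one_pow, coeff_X_pow, coeff_one, coeff_C_mul,
    coeff_binomialMiddle]
  rcases Nat.eq_zero_or_pos n with rfl | hn
  · simp [hp.ne_zero.symm, Nat.div_eq_of_lt hp.one_lt]
  rcases lt_trichotomy n p with hlt | rfl | hgt
  · rw [if_neg hlt.ne, if_neg hn.ne', ← Nat.cast_mul,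
      Nat.mul_div_cancel' (hp.dvd_choose_self hn.ne' hlt)]
    simp
  · simp [hn.ne', Nat.div_eq_of_lt hp.one_lt]
  · simp [Nat.choose_eq_zero_of_lt hgt, hgt.ne', hn.ne']

theorem X_add_one_pow_mul_prime_eq_sum {p : ℕ} (hp : p.Prime) (a : ℕ) :
    (X + 1 : ℤ[X]) ^ (a * p) = ∑ j ∈ range (a + 1),
      (C (p : ℤ) * binomialMiddle p) ^ j * expand ℤ p ((X + 1) ^ (a - j)) * ↑(a.choose j) := by
  rw [mul_comm, pow_mul, X_add_one_pow_prime_eq hp, add_comm (X ^ p + 1), add_pow]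
  simp only [map_pow, map_add, expand_X, map_one]

theorem dvd_coeff_mul_expand {R : Type*} [CommSemiring R] {p : ℕ} (hp : 0 < p) {d : R}
    {g : R[X]} (hg : ∀ k, p ∣ k → d ∣ g.coeff k) (f : R[X]) (n : ℕ) :
    d ∣ (g * expand R p f).coeff (n * p) := by
  rw [coeff_mul]
  refine dvd_sum fun ⟨i, j⟩ hij => ?_
  rw [HasAntidiagonal.mem_antidiagonal] at hij
  rw [coeff_expand hp]
  split_ifs with hj
  · exact (hg i ((Nat.dvd_add_left hj).1 (hij ▸ dvd_mul_left p n))).mul_right _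
  · simp

theorem coeff_binomialMiddle_eq_zero {p k : ℕ} (hp : p.Prime) (hk : k ∉ Ioo 0 p) :
    (binomialMiddle p).coeff k = 0 := by
  rw [mem_Ioo, not_and_or, not_lt, not_lt] at hk
  rw [coeff_binomialMiddle, Nat.cast_eq_zero]
  rcases hk with hk | hk
  · simp [Nat.le_zero.1 hk, Nat.div_eq_of_lt hp.one_lt]
  rcases hk.eq_or_lt with rfl | hlt
  · simp [Nat.div_eq_of_lt hp.one_lt]
  · simp [Nat.choose_eq_zero_of_lt hlt]

theorem prime_dvd_coeff_self_binomialMiddle_sq {p : ℕ} (hp : p.Prime) (hp3 : 3 < p) :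
    (p : ℤ) ∣ (binomialMiddle p ^ 2).coeff p := by
  have := Fact.mk hp
  rw [← ZMod.intCast_zmod_eq_zero_iff_dvd, sq, coeff_mul,
    Nat.sum_antidiagonal_eq_sum_range_succ_mk]
  simp only [coeff_binomialMiddle]
  rw [sum_congr rfl fun i hi => by rw [Nat.choose_symm (Nat.lt_succ_iff.1 (mem_range.1 hi))],
    sum_range_succ, Nat.div_eq_of_lt (by simpa using hp.one_lt)]
  simp only [Nat.cast_zero, mul_zero, add_zero, Int.cast_sum, Int.cast_mul, Int.cast_natCast]
  rw [sum_congr rfl fun i hi => by rw [← sq, hp.cast_choose_div_sq (mem_range.1 hi)]]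
  simpa using ZMod.sum_range_inv_sq_eq_zero hp3

theorem prime_dvd_coeff_binomialMiddle_sq {p k : ℕ} (hp : p.Prime) (hp3 : 3 < p) (hk : p ∣ k) :
    (p : ℤ) ∣ (binomialMiddle p ^ 2).coeff k := by
  rcases eq_or_ne k p with rfl | hkp
  · exact prime_dvd_coeff_self_binomialMiddle_sq hp hp3
  rw [sq, coeff_mul, sum_eq_zero]
  · exact dvd_zero _
  rintro ⟨i, j⟩ hij
  rw [HasAntidiagonal.mem_antidiagonal] at hij
  by_cases hi : i ∈ Ioo 0 p
  · refine mul_eq_zero_of_right _ (coeff_binomialMiddle_eq_zero hp fun hj => hkp ?_)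
    obtain ⟨c, rfl⟩ := hk
    rw [mem_Ioo] at hi hj
    rcases c with _ | _ | c
    · omega
    · simp
    · nlinarith
  · exact mul_eq_zero_of_left (coeff_binomialMiddle_eq_zero hp hi) _

theorem prime_pow_three_dvd_coeff_mul_expand {p : ℕ} (hp : p.Prime) (hp3 : 3 < p) (j : ℕ)
    (f : ℤ[X]) (n : ℕ) :
    (p : ℤ) ^ 3 ∣ ((C (p : ℤ) * binomialMiddle p) ^ (j + 1) * expand ℤ p f).coeff (n * p) := by
  rw [mul_pow, ← C_pow, mul_assoc, coeff_C_mul]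
  match j with
  | 0 =>
    have hvanish : ∀ k, p ∣ k → (0 : ℤ) ∣ (binomialMiddle p).coeff k := fun k hk =>
      zero_dvd_iff.2 (coeff_binomialMiddle_eq_zero hp fun hk' =>
        Nat.not_dvd_of_pos_of_lt (mem_Ioo.1 hk').1 (mem_Ioo.1 hk').2 hk)
    simp only [zero_add, pow_one]
    rw [zero_dvd_iff.1 (dvd_coeff_mul_expand hp.pos hvanish f n), mul_zero]
    exact dvd_zero _
  | 1 =>
    rw [pow_succ (p : ℤ) 2]
    exact mul_dvd_mul_left _
      (dvd_coeff_mul_expand hp.pos (fun k hk => prime_dvd_coeff_binomialMiddle_sq hp hp3 hk) f n)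
  | j + 2 => exact (pow_dvd_pow _ (by omega)).mul_right _

theorem ljunggren_general (a b p : ℕ) (hp : p.Prime) (h : 3 < p) :
    Nat.choose (a*p) (b*p) ≡ Nat.choose a b [MOD p^3] := by
  rw [← Int.natCast_modEq_iff, ← coeff_X_add_one_pow ℤ, X_add_one_pow_mul_prime_eq_sum hp,
    finsetSum_coeff, sum_range_succ']
  simp only [coeff_mul_natCast, pow_zero, one_mul, Nat.sub_zero, Nat.choose_zero_right,
    Nat.cast_one, mul_one, coeff_expand_mul hp.pos, coeff_X_add_one_pow]
  rw [Int.modEq_iff_dvd, sub_add_cancel_right, dvd_neg, Nat.cast_pow]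
  exact dvd_sum fun j _ => (prime_pow_three_dvd_coeff_mul_expand hp h j _ b).mul_right _

theorem ljunggren (a b p : ℕ) (hab : b ≤ a) (hp : p.Prime) (h : 3 < p) :
    Nat.choose (a*p) (b*p) ≡ Nat.choose a b [MOD p^3] :=
  ljunggren_general a b p hp h
end

section
/- For all integers a > b > 0 and every prime p > 3, p^{3 + v} divides C(a*p, b*p) - C(a, b), where v is the p-adic valuation of a*b*(a-b). -/
/-!
Put `m = b` and `s = a - b`, so that `v = v_p(m) + v_p(s) + v_p(m + s)`, and let `P` and `Q` be
the products of `k` and of `s p + k` over the `k ∈ (0, m p]` prime to `p`. Splitting `(m p)!`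
and `∏_{j ≤ m p} (s p + j)` into multiples and non-multiples of `p` gives
`C((m + s) p, m p) P = C(m + s, m) Q`, so it suffices that `p ^ (3 + v) ∣ Q - P`, and since
`Q + P ≡ 2 P` is prime to `p`, that `p ^ (3 + v) ∣ Q² - P²`. Pairing `k` with `m p - k` gives
`P² = ∏ q_k` and `Q² = ∏ (q_k + w)`, where `q_k = k (m p - k)` and `w = (m + s) s p²`; modulo
`w²` the difference is `w ∑_k ∏_{j ≠ k} q_j`. Modulo `p ^ (v_p(m) + 1)` we have `q_k ≡ -k²`,
and the sum becomes a multiple of `∑ x⁻²` over the units of `ℤ/p^(v_p(m)+1)`, which vanishes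
for `p > 3`: substituting `x ↦ 2 x` shows that it is a quarter of itself. The symmetry
`C(a p, b p) = C(a p, (a - b) p)` allows `v_p(m) ≤ v_p(s)`, which is what makes `w²` divisible
enough.
-/

open Finset
open scoped Ring

namespace Jacobsthal

theorem sq_dvd_prod_add_sub {ι R : Type*} [DecidableEq ι] [CommRing R] (s : Finset ι)
    (q : ι → R) (w : R) :
    w ^ 2 ∣ ∏ i ∈ s, (q i + w) - ∏ i ∈ s, q i - w * ∑ i ∈ s, ∏ j ∈ s.erase i, q j := by
  induction s using Finset.induction_on with
  | empty => simp
  | @insert a s ha ih =>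
    obtain ⟨r, hr⟩ := ih
    have hsum : ∑ i ∈ insert a s, ∏ j ∈ (insert a s).erase i, q j
        = ∏ j ∈ s, q j + q a * ∑ i ∈ s, ∏ j ∈ s.erase i, q j := by
      rw [sum_insert ha, erase_insert ha, mul_sum]
      congr 1
      refine sum_congr rfl fun i hi => ?_
      rw [erase_insert_of_ne (ne_of_mem_of_not_mem hi ha).symm,
        prod_insert (fun h => ha (mem_of_mem_erase h))]
    refine ⟨(q a + w) * r + ∑ i ∈ s, ∏ j ∈ s.erase i, q j, ?_⟩
    rw [prod_insert ha, prod_insert ha, hsum]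
    linear_combination (q a + w) * hr

theorem sum_prod_erase_eq_prod_mul_sum_inverse {ι R : Type*} [DecidableEq ι] [CommSemiring R]
    {s : Finset ι} {q : ι → R} (hq : ∀ i ∈ s, IsUnit (q i)) :
    ∑ i ∈ s, ∏ j ∈ s.erase i, q j = (∏ i ∈ s, q i) * ∑ i ∈ s, (q i)⁻¹ʳ := by
  rw [mul_sum]
  refine sum_congr rfl fun i hi => ?_
  rw [← mul_prod_erase s q hi, mul_comm (q i), mul_assoc, Ring.mul_inverse_cancel _ (hq i hi),
    mul_one]

theorem sum_inverse_mul_sq_eq_zero {R : Type*} [CommRing R] [Fintype R] {g : R}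
    (hg : IsUnit g) (hg' : IsUnit (g ^ 2 - 1)) (c : R) :
    ∑ x : R, (c * x ^ 2)⁻¹ʳ = 0 := by
  have hfix : ∑ x : R, (c * x ^ 2)⁻¹ʳ = g ^ 2 * ∑ x : R, (c * x ^ 2)⁻¹ʳ := by
    rw [mul_sum]
    refine Fintype.sum_equiv (Units.mulLeft hg.unit) _ _ fun x => ?_
    rw [Units.mulLeft_apply, IsUnit.unit_spec, mul_pow, mul_left_comm c,
      Ring.mul_inverse_rev (g ^ 2), mul_left_comm (g ^ 2), Ring.mul_inverse_cancel _ (hg.pow 2),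
      mul_one]
  exact hg'.mul_right_eq_zero.1 (by linear_combination -hfix)

theorem sum_range_mul_natCast {n : ℕ} [NeZero n] {M : Type*} [AddCommMonoid M]
    (F : ZMod n → M) (c : ℕ) :
    ∑ k ∈ range (c * n), F k = c • ∑ x, F x := by
  induction c with
  | zero => simp
  | succ c ih =>
    rw [add_mul, one_mul, sum_range_add, ih, succ_nsmul]
    congr 1
    refine sum_nbij' (↑) ZMod.val (by simp) (fun x _ => by simpa using ZMod.val_lt x)
      (fun k hk => ZMod.val_cast_of_lt (mem_range.1 hk)) (fun x _ => ZMod.natCast_zmod_val x)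
      fun _ _ => by simp

theorem sum_range_inverse_mul_sq_eq_zero {n N : ℕ} (hn : Nat.Coprime 6 n) (hnN : n ∣ N)
    (c : ZMod n) : ∑ k ∈ range N, (c * (k : ZMod n) ^ 2)⁻¹ʳ = 0 := by
  have : NeZero n := ⟨by rintro rfl; norm_num at hn⟩
  have h2 : IsUnit (2 : ZMod n) := by
    simpa using (ZMod.isUnit_iff_coprime 2 n).2 (Nat.Coprime.coprime_dvd_left (by norm_num) hn)
  have h3 : IsUnit ((2 : ZMod n) ^ 2 - 1) := by
    have := (ZMod.isUnit_iff_coprime 3 n).2 (Nat.Coprime.coprime_dvd_left (by norm_num) hn)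
    norm_num at this ⊢
    exact this
  obtain ⟨c', rfl⟩ := hnN
  rw [mul_comm, sum_range_mul_natCast (fun x => (c * x ^ 2)⁻¹ʳ),
    sum_inverse_mul_sq_eq_zero h2 h3, smul_zero]

def nonMultiples (p N : ℕ) : Finset ℕ := {k ∈ Ioc 0 N | ¬ p ∣ k}

section nonMultiples

variable {p N : ℕ}

theorem mem_nonMultiples {k : ℕ} : k ∈ nonMultiples p N ↔ 0 < k ∧ k ≤ N ∧ ¬ p ∣ k := by
  simp [nonMultiples, and_assoc]

theorem nonMultiples_eq_filter_range (h : p ∣ N) :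
    nonMultiples p N = {k ∈ range N | ¬ p ∣ k} := by
  ext k
  simp only [mem_nonMultiples, mem_filter, mem_range]
  constructor
  · rintro ⟨-, hkN, hk⟩
    exact ⟨lt_of_le_of_ne hkN (by rintro rfl; exact hk h), hk⟩
  · rintro ⟨hkN, hk⟩
    exact ⟨Nat.pos_of_ne_zero (by rintro rfl; exact hk (dvd_zero p)), hkN.le, hk⟩

theorem prod_nonMultiples_sub {M : Type*} [CommMonoid M] (h : p ∣ N) (f : ℤ → M) :
    ∏ k ∈ nonMultiples p N, f (N - k) = ∏ k ∈ nonMultiples p N, f k := by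
  have hsub {k : ℕ} (hk : k ∈ nonMultiples p N) : N - k ∈ nonMultiples p N := by
    rw [mem_nonMultiples] at hk ⊢
    obtain ⟨-, hkN, hpk⟩ := hk
    refine ⟨?_, N.sub_le k, fun hpNk => hpk ?_⟩
    · exact Nat.sub_pos_of_lt (lt_of_le_of_ne hkN (by rintro rfl; exact hpk h))
    · simpa [Nat.sub_sub_self hkN] using Nat.dvd_sub h hpNk
  refine prod_nbij' (N - ·) (N - ·) (fun k hk => hsub hk) (fun k hk => hsub hk)
    (fun k hk => Nat.sub_sub_self (mem_nonMultiples.1 hk).2.1)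
    (fun k hk => Nat.sub_sub_self (mem_nonMultiples.1 hk).2.1) fun k hk => ?_
  rw [Nat.cast_sub (mem_nonMultiples.1 hk).2.1]

theorem prod_nonMultiples_sq {M : Type*} [CommMonoid M] (h : p ∣ N) (f : ℤ → M) :
    (∏ k ∈ nonMultiples p N, f k) ^ 2 = ∏ k ∈ nonMultiples p N, f k * f (N - k) := by
  rw [sq, prod_mul_distrib, prod_nonMultiples_sub h]

theorem sum_nonMultiples_inverse_mul_sq_eq_zero (hp : p.Prime) (hp6 : Nat.Coprime 6 p)
    {e : ℕ} (he : 0 < e) (hN : p ^ e ∣ N) (c : ZMod (p ^ e)) :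
    ∑ k ∈ nonMultiples p N, (c * (k : ZMod (p ^ e)) ^ 2)⁻¹ʳ = 0 := by
  -- `Ring.inverse` vanishes at the multiples of `p`, so the sum extends to all of `range N`
  rw [nonMultiples_eq_filter_range ((dvd_pow_self p he.ne').trans hN), sum_filter_of_ne,
    sum_range_inverse_mul_sq_eq_zero (hp6.pow_right e) hN]
  intro k _ hk hpk
  refine hk (Ring.inverse_non_unit _ fun hu => ?_)
  exact (ZMod.isUnit_natCast_iff_not_dvd_pow hp he).1
    (isUnit_pow_iff two_ne_zero |>.1 (isUnit_of_mul_isUnit_right hu)) hpk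

theorem prod_Ioc_mul_eq_prod_mul_prod_nonMultiples {M : Type*} [CommMonoid M] (hp : 0 < p)
    (m : ℕ) (f : ℕ → M) :
    ∏ j ∈ Ioc 0 (m * p), f j = (∏ i ∈ Ioc 0 m, f (i * p)) * ∏ k ∈ nonMultiples p (m * p), f k := by
  have hmul :
      {j ∈ Ioc 0 (m * p) | p ∣ j} = (Ioc 0 m).map ⟨(· * p), mul_left_injective₀ hp.ne'⟩ := by
    ext j
    simp only [mem_filter, mem_Ioc, mem_map, Function.Embedding.coeFn_mk]
    constructor
    · rintro ⟨⟨hj0, hjm⟩, i, rfl⟩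
      exact ⟨i, ⟨Nat.pos_of_mul_pos_left hj0, Nat.le_of_mul_le_mul_right (by linarith) hp⟩,
        mul_comm i p⟩
    · rintro ⟨i, ⟨hi0, him⟩, rfl⟩
      exact ⟨⟨Nat.mul_pos hi0 hp, Nat.mul_le_mul_right p him⟩, dvd_mul_left p i⟩
  rw [← prod_filter_mul_prod_filter_not (Ioc 0 (m * p)) (p ∣ ·), hmul, prod_map]
  rfl

end nonMultiples

theorem prod_Ioc_add_eq_factorial_mul_choose (x N : ℕ) :
    ∏ j ∈ Ioc 0 N, (x + j) = N.factorial * (x + N).choose N := by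
  induction N with
  | zero => simp
  | succ N ih =>
    rw [prod_Ioc_succ_top N.zero_le, ih, Nat.factorial_succ, ← add_assoc]
    linear_combination N.factorial * Nat.add_one_mul_choose_eq (x + N) N

theorem choose_mul_prod_nonMultiples {p : ℕ} (hp : 0 < p) (m s : ℕ) :
    ((m + s) * p).choose (m * p) * ∏ k ∈ nonMultiples p (m * p), k
      = (m + s).choose m * ∏ k ∈ nonMultiples p (m * p), (s * p + k) := by
  have key (x : ℕ) : (m * p).factorial * (x * p + m * p).choose (m * p)
      = p ^ m * m.factorial * (x + m).choose m * ∏ k ∈ nonMultiples p (m * p), (x * p + k) := by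
    rw [← prod_Ioc_add_eq_factorial_mul_choose, prod_Ioc_mul_eq_prod_mul_prod_nonMultiples hp,
      prod_congr rfl fun i _ => (show x * p + i * p = p * (x + i) by ring), prod_mul_distrib,
      prod_const, Nat.card_Ioc, Nat.sub_zero, prod_Ioc_add_eq_factorial_mul_choose]
    ring
  have hfac := key 0
  simp only [zero_mul, zero_add, Nat.choose_self, mul_one] at hfac
  have hs := key s
  rw [hfac, ← add_mul, add_comm s m] at hs
  have hpos : 0 < p ^ m * m.factorial := Nat.mul_pos (pow_pos hp m) m.factorial_pos
  refine Nat.eq_of_mul_eq_mul_left hpos ?_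
  linear_combination hs

section Core

variable {p : ℕ}

theorem pow_dvd_sum_prod_erase (hp : p.Prime) (hp6 : Nat.Coprime 6 p) (m : ℕ) :
    (p : ℤ) ^ (padicValNat p m + 1) ∣ ∑ k ∈ nonMultiples p (m * p),
      ∏ j ∈ (nonMultiples p (m * p)).erase k, ((j : ℤ) * (m * p - j)) := by
  set e := padicValNat p m + 1
  have he : 0 < e := Nat.succ_pos _
  have hN : p ^ e ∣ m * p := pow_succ p _ ▸ mul_dvd_mul_right pow_padicValNat_dvd p
  have hmp : (m : ZMod (p ^ e)) * p = 0 := by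
    exact_mod_cast (ZMod.natCast_eq_zero_iff _ _).2 hN
  have hq : ∀ j ∈ nonMultiples p (m * p),
      (j : ZMod (p ^ e)) * (m * p - j) = -1 * (j : ZMod (p ^ e)) ^ 2 := fun j _ => by
    rw [hmp]; ring
  have hunit : ∀ j ∈ nonMultiples p (m * p), IsUnit (-1 * (j : ZMod (p ^ e)) ^ 2) :=
    fun j hj => isUnit_one.neg.mul <|
      ((ZMod.isUnit_natCast_iff_not_dvd_pow hp he).2 (mem_nonMultiples.1 hj).2.2).pow 2
  rw [← Nat.cast_pow, ← ZMod.intCast_zmod_eq_zero_iff_dvd]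
  push_cast
  rw [sum_congr rfl fun k _ => prod_congr rfl fun j hj => hq j (mem_of_mem_erase hj),
    sum_prod_erase_eq_prod_mul_sum_inverse hunit,
    sum_nonMultiples_inverse_mul_sq_eq_zero hp hp6 he hN, mul_zero]

theorem pow_dvd_prod_add_sq_sub_prod_sq (hp : p.Prime) (hp6 : Nat.Coprime 6 p) {m s : ℕ}
    (hv : padicValNat p m ≤ padicValNat p s) :
    (p : ℤ) ^ (3 + padicValNat p m + padicValNat p s + padicValNat p (m + s)) ∣
      (∏ k ∈ nonMultiples p (m * p), ((s * p : ℤ) + k)) ^ 2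
        - (∏ k ∈ nonMultiples p (m * p), (k : ℤ)) ^ 2 := by
  set S := nonMultiples p (m * p)
  set q : ℕ → ℤ := fun k => k * (m * p - k)
  set w : ℤ := (m + s) * s * p ^ 2
  have hpS : p ∣ m * p := dvd_mul_left p m
  have hP : (∏ k ∈ S, (k : ℤ)) ^ 2 = ∏ k ∈ S, q k := by
    rw [prod_nonMultiples_sq hpS fun x : ℤ => x]
    push_cast
    rfl
  have hQ : (∏ k ∈ S, ((s * p : ℤ) + k)) ^ 2 = ∏ k ∈ S, (q k + w) := by
    rw [prod_nonMultiples_sq hpS fun x : ℤ => (s * p : ℤ) + x]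
    push_cast
    exact prod_congr rfl fun k _ => by ring
  have hw : (p : ℤ) ^ (2 + padicValNat p (m + s) + padicValNat p s) ∣ w := by
    rw [show (p : ℤ) ^ (2 + padicValNat p (m + s) + padicValNat p s)
      = p ^ padicValNat p (m + s) * p ^ padicValNat p s * p ^ 2 by ring]
    exact mul_dvd_mul (mul_dvd_mul (by exact_mod_cast pow_padicValNat_dvd)
      (by exact_mod_cast pow_padicValNat_dvd)) dvd_rfl
  obtain ⟨r, hr⟩ := sq_dvd_prod_add_sub S q w
  rw [hP, hQ, show ∏ k ∈ S, (q k + w) - ∏ k ∈ S, q k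
    = w ^ 2 * r + w * ∑ k ∈ S, ∏ j ∈ S.erase k, q j by linear_combination hr]
  refine dvd_add (dvd_mul_of_dvd_left ((pow_dvd_pow _ (?_ : _ ≤ _ * 2)).trans
    (pow_mul (p : ℤ) _ 2 ▸ pow_dvd_pow_of_dvd hw 2)) _) ?_
  · omega
  · rw [show 3 + padicValNat p m + padicValNat p s + padicValNat p (m + s)
      = (2 + padicValNat p (m + s) + padicValNat p s) + (padicValNat p m + 1) by omega, pow_add]
    exact mul_dvd_mul hw (pow_dvd_sum_prod_erase hp hp6 m)

theorem not_dvd_prod_mul_prod_add (hp : p.Prime) (hp2 : p ≠ 2) (s N : ℕ) :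
    ¬ (p : ℤ) ∣ (∏ k ∈ nonMultiples p N, (k : ℤ))
      * (∏ k ∈ nonMultiples p N, ((s * p : ℤ) + k) + ∏ k ∈ nonMultiples p N, (k : ℤ)) := by
  have := Fact.mk hp
  have h2 : (2 : ZMod p) ≠ 0 := by
    simpa using (ZMod.natCast_eq_zero_iff 2 p).not.2
      fun h => hp2 ((Nat.prime_dvd_prime_iff_eq hp Nat.prime_two).1 h)
  have hP : ∏ k ∈ nonMultiples p N, (k : ZMod p) ≠ 0 :=
    prod_ne_zero_iff.2 fun k hk => (ZMod.natCast_eq_zero_iff k p).not.2 (mem_nonMultiples.1 hk).2.2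
  rw [← ZMod.intCast_zmod_eq_zero_iff_dvd]
  push_cast
  rw [ZMod.natCast_self, mul_zero]
  simp only [zero_add, ← two_mul]
  exact mul_ne_zero hP (mul_ne_zero h2 hP)

theorem pow_dvd_choose_mul_sub_choose (hp : p.Prime) (hp6 : Nat.Coprime 6 p) {m s : ℕ}
    (hv : padicValNat p m ≤ padicValNat p s) :
    (p : ℤ) ^ (3 + padicValNat p m + padicValNat p s + padicValNat p (m + s)) ∣
      (((m + s) * p).choose (m * p) : ℤ) - (m + s).choose m := by
  have hkey : (((m + s) * p).choose (m * p) : ℤ) * ∏ k ∈ nonMultiples p (m * p), (k : ℤ)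
      = (m + s).choose m * ∏ k ∈ nonMultiples p (m * p), ((s * p : ℤ) + k) := by
    have := congrArg (Nat.cast : ℕ → ℤ) (choose_mul_prod_nonMultiples hp.pos m s)
    push_cast at this
    exact this
  set P := ∏ k ∈ nonMultiples p (m * p), (k : ℤ)
  set Q := ∏ k ∈ nonMultiples p (m * p), ((s * p : ℤ) + k)
  have hp2 : p ≠ 2 := by rintro rfl; norm_num at hp6
  have hcop : IsCoprime ((p : ℤ) ^ (3 + padicValNat p m + padicValNat p s + padicValNat p (m + s)))
      (P * (Q + P)) :=
    ((Nat.prime_iff_prime_int.1 hp).coprime_iff_not_dvd.2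
      (not_dvd_prod_mul_prod_add hp hp2 s _)).pow_left
  refine hcop.dvd_of_dvd_mul_right ?_
  rw [show ((((m + s) * p).choose (m * p) : ℤ) - (m + s).choose m) * (P * (Q + P))
    = (m + s).choose m * (Q ^ 2 - P ^ 2) by linear_combination (Q + P) * hkey]
  exact dvd_mul_of_dvd_right (pow_dvd_prod_add_sq_sub_prod_sq hp hp6 hv) _

end Core

end Jacobsthal

theorem jacobsthal (a b p : ℕ) (hb : 0 < b) (hab : b < a) (hp : p.Prime) (h : 3 < p) :
    (p : ℤ)^(3 + padicValNat p (a * b * (a - b))) ∣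
      (Nat.choose (a*p) (b*p) : ℤ) - (Nat.choose a b : ℤ) := by
  obtain ⟨c, rfl⟩ : ∃ c, a = b + c := ⟨a - b, by omega⟩
  have hp6 : Nat.Coprime (2 * 3) p := Nat.Coprime.mul_left
    ((Nat.coprime_primes Nat.prime_two hp).2 (by omega))
    ((Nat.coprime_primes Nat.prime_three hp).2 (by omega))
  have hval : padicValNat p ((b + c) * b * (b + c - b))
      = padicValNat p b + padicValNat p c + padicValNat p (b + c) := by
    have := Fact.mk hp
    rw [Nat.add_sub_cancel_left, padicValNat.mul (by positivity) (by omega),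
      padicValNat.mul (by positivity) (by omega)]
    ring
  rw [hval]
  rcases le_total (padicValNat p b) (padicValNat p c) with hbc | hcb
  · simpa [add_assoc] using Jacobsthal.pow_dvd_choose_mul_sub_choose hp hp6 hbc
  · have := Jacobsthal.pow_dvd_choose_mul_sub_choose hp hp6 hcb
    rw [add_mul, Nat.choose_symm_add, ← add_mul, Nat.choose_symm_add, add_comm c b] at this
    convert this using 2
    ring
end

section
/- For all integers a ≥ b ≥ 0 and every prime p, C(a*p, b*p) = C(a, b) * B_p(a*p, b*p), where B_p denotes the modified binomial coefficient built from modified factorials a!_p = ∏_{1 ≤ k ≤ a, p ∤ k} k. -/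
/-!
Among `1, …, n p` the multiples of `p` are `p, 2p, …, np`, whose product is `p ^ n * n!`, so
`(n p)! = p ^ n * n! * (n p)!_p`. Writing the three factorials of `C(a p, b p)` this way, the
powers of `p` cancel and the ordinary factorials recombine into `C(a, b)`.
-/

/-- The modified factorial `a!_p`: the product of all `k` with `1 ≤ k ≤ a` and `p ∤ k`. -/
def modFact (p a : ℕ) : ℕ := ((Finset.Icc 1 a).filter (fun k => ¬ p ∣ k)).prod id

open Finset Nat

theorem prod_Icc_id_eq_factorial (n : ℕ) : ∏ k ∈ Icc 1 n, k = n ! := by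
  rw [← Ico_add_one_right_eq_Icc, prod_Ico_id_eq_factorial]

theorem modFact_pos (p n : ℕ) : 0 < modFact p n :=
  prod_pos fun _ hk => (mem_Icc.mp (mem_filter.mp hk).1).1

theorem filter_dvd_Icc_mul_eq_image {p : ℕ} (hp : 0 < p) (n : ℕ) :
    {k ∈ Icc 1 (n * p) | p ∣ k} = (Icc 1 n).image (· * p) := by
  ext k
  simp only [mem_filter, mem_Icc, mem_image]
  constructor
  · rintro ⟨⟨hk1, hkn⟩, j, rfl⟩
    exact ⟨j, ⟨Nat.pos_of_mul_pos_left hk1, Nat.le_of_mul_le_mul_right (by linarith) hp⟩,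
      mul_comm _ _⟩
  · rintro ⟨j, ⟨hj1, hjn⟩, rfl⟩
    exact ⟨⟨Nat.mul_pos hj1 hp, Nat.mul_le_mul_right p hjn⟩, dvd_mul_left p j⟩

theorem prod_filter_dvd_Icc_mul {p : ℕ} (hp : 0 < p) (n : ℕ) :
    ∏ k ∈ Icc 1 (n * p) with p ∣ k, k = p ^ n * n ! := by
  rw [filter_dvd_Icc_mul_eq_image hp, prod_image fun _ _ _ _ => Nat.eq_of_mul_eq_mul_right hp,
    prod_mul_distrib, prod_const, Nat.card_Icc, Nat.add_sub_cancel, prod_Icc_id_eq_factorial,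
    mul_comm]

theorem factorial_mul_eq_pow_mul_factorial_mul_modFact {p : ℕ} (hp : 0 < p) (n : ℕ) :
    (n * p)! = p ^ n * n ! * modFact p (n * p) := by
  rw [modFact, ← prod_filter_dvd_Icc_mul hp, ← prod_Icc_id_eq_factorial]
  exact (prod_filter_mul_prod_filter_not _ (p ∣ ·) id).symm

theorem choose_mul_mul_modFact {p : ℕ} (hp : 0 < p) {a b : ℕ} (hab : b ≤ a) :
    (a * p).choose (b * p) * (modFact p (b * p) * modFact p ((a - b) * p)) =
      a.choose b * modFact p (a * p) := by
  apply Nat.eq_of_mul_eq_mul_left (show 0 < p ^ a * b ! * (a - b)! by positivity)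
  calc _ = (a * p).choose (b * p) * (b * p)! * (a * p - b * p)! := by
        rw [← Nat.sub_mul, factorial_mul_eq_pow_mul_factorial_mul_modFact hp,
          factorial_mul_eq_pow_mul_factorial_mul_modFact hp, ← Nat.pow_sub_mul_pow p hab]
        ring
    _ = a.choose b * b ! * (a - b)! * p ^ a * modFact p (a * p) := by
        rw [Nat.choose_mul_factorial_mul_factorial (Nat.mul_le_mul_right p hab),
          Nat.choose_mul_factorial_mul_factorial hab,
          factorial_mul_eq_pow_mul_factorial_mul_modFact hp]
        ring
    _ = _ := by ring

theorem choose_mul_eq_choose_mul_modified (p a b : ℕ) (hp : p.Prime) (hab : b ≤ a) :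
    (Nat.choose (a*p) (b*p) : ℚ) =
      (Nat.choose a b : ℚ) *
        ((modFact p (a*p) : ℚ) / ((modFact p (b*p) : ℚ) * (modFact p (a*p - b*p) : ℚ))) := by
  have hM : (modFact p (b * p) : ℚ) * modFact p (a * p - b * p) ≠ 0 := by
    have := modFact_pos p (b * p)
    have := modFact_pos p (a * p - b * p)
    positivity
  rw [mul_div_assoc', eq_div_iff hM, ← Nat.sub_mul]
  exact_mod_cast choose_mul_mul_modFact hp.pos hab
end

section
/- For all integers n ≥ 1 and 0 ≤ j ≤ n, C(2n+1, j) * (2(n-j)+1) / (2n+1) = C(2n-1, j) - C(2n-1, j-2), where C(m, k) = 0 for k < 0. -/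
/-!
Writing `m = 2n - 1`, the identity reads
`(m + 2) (C(m, j) - C(m, j - 2)) = (m + 2 - 2j) C(m + 2, j)`.
By Pascal's rule `C(m, j) - C(m, j - 2) = C(m + 1, j) - C(m + 1, j - 1)`, and the absorption
identities `(m + 2) C(m + 1, j - 1) = j C(m + 2, j)` and
`(m + 2) C(m + 1, j) = (m + 2 - j) C(m + 2, j)` turn the right-hand difference into
`(m + 2 - 2j) C(m + 2, j) / (m + 2)`.
-/

namespace Nat

variable {R : Type*} [CommRing R]

theorem add_one_mul_choose_succ_sub_choose (m k : ℕ) :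
    ((m + 1 : ℕ) : R) * (m.choose (k + 1) - m.choose k) =
      ((m : R) - 2 * k - 1) * (m + 1).choose (k + 1) := by
  have absorb := congrArg (Nat.cast : ℕ → R) (add_one_mul_choose_eq m k)
  have pascal := congrArg (Nat.cast : ℕ → R) (choose_succ_succ' m k)
  push_cast at absorb pascal ⊢
  linear_combination (-2 : R) * absorb - (m + 1 : R) * pascal

theorem add_two_mul_choose_add_two_sub_choose (m k : ℕ) :
    ((m + 2 : ℕ) : R) * (m.choose (k + 2) - m.choose k) =
      ((m : R) - 2 * k - 2) * (m + 2).choose (k + 2) := by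
  have pascal₁ := congrArg (Nat.cast : ℕ → R) (choose_succ_succ' m (k + 1))
  have pascal₀ := congrArg (Nat.cast : ℕ → R) (choose_succ_succ' m k)
  have h := add_one_mul_choose_succ_sub_choose (R := R) (m + 1) (k + 1)
  push_cast at pascal₁ pascal₀ h ⊢
  linear_combination h - (m + 2 : R) * pascal₁ + (m + 2 : R) * pascal₀

end Nat

theorem stmt12_general (n j : ℕ) (hn : 1 ≤ n) :
    ((Nat.choose (2*n+1) j : ℚ) * (2*(n-j)+1)) / (2*n+1) =
      (Nat.choose (2*n-1) j : ℚ) - (if j < 2 then 0 else (Nat.choose (2*n-1) (j-2) : ℚ)) := by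
  obtain ⟨m, rfl⟩ : ∃ m, n = m + 1 := ⟨n - 1, by omega⟩
  have hodd : 2 * (m + 1) - 1 = 2 * m + 1 := by omega
  rw [hodd, div_eq_iff (by positivity)]
  rcases Nat.lt_or_ge j 2 with hj2 | hj2
  · interval_cases j
    · simp
    · simp; ring
  · obtain ⟨k, rfl⟩ : ∃ k, j = k + 2 := ⟨j - 2, by omega⟩
    have h := Nat.add_two_mul_choose_add_two_sub_choose (R := ℚ) (2 * m + 1) k
    rw [if_neg (by omega), Nat.add_sub_cancel, show 2 * (m + 1) + 1 = 2 * m + 1 + 2 by ring]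
    push_cast at h ⊢
    linear_combination -h

theorem stmt12 (n j : ℕ) (hn : 1 ≤ n) (hj : j ≤ n) :
    ((Nat.choose (2*n+1) j : ℚ) * (2*(n-j)+1)) / (2*n+1) =
      (Nat.choose (2*n-1) j : ℚ) - (if j < 2 then 0 else (Nat.choose (2*n-1) (j-2) : ℚ)) :=
  stmt12_general n j hn
end

section
/- Let n ≥ 1 be an integer and p a prime with p > 2n+1. Then p^{2n+1} divides the sum over j from 0 to n of (-1)^j * (C(2n, j) - C(2n, j-1)) * C((n+1-j)*p, p) / (n+1-j). -/
open Finset Polynomial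

/-!
Put `a j = (-1)^j (C(2n, j) - C(2n, j-1))`, the coefficients of `(1 + x) (1 - x)^(2n)`, and
`F x = ∏_{i=1}^{p-1} (p x - i)`, so that `F m = (p-1)! C(mp - 1, p - 1)` for `m ≥ 1`.
Since `a (2n+1-j) = a j` and `F (1 - x) = F x`, the sum of `a j F (n+1-j)` over `0 ≤ j ≤ 2n+1`
is `2 (p-1)!` times the given sum. Expanding `F` in powers of `p x`, the moments
`∑ a j (n+1-j)^k` vanish for `k < 2n` (the zero of order `2n` at `x = 1`), the coefficient of `X^(2n)` in
`∏ (X - i)` is divisible by `p` because `∏ (X - i) ≡ X^(p-1) - 1 mod p`, and all later terms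
carry `p^(2n+1)`.
-/

theorem sum_range_neg_one_pow_mul_choose_mul_sub_pow {R : Type*} [CommRing R] {m k : ℕ}
    (hk : k < m) (c : R) :
    ∑ j ∈ range (m + 1), (-1) ^ j * (m.choose j : R) * (c - j) ^ k = 0 := by
  have h := congr_fun (fwdDiff_iter_pow_eq_zero_of_lt (R := R) hk) (c - m)
  rw [fwdDiff_iter_eq_sum_shift, Pi.zero_apply, ← sum_range_reflect] at h
  rw [← h]
  refine sum_congr rfl fun j hj => ?_
  have hj : j ≤ m := Nat.lt_succ_iff.mp (mem_range.mp hj)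
  rw [Nat.add_sub_cancel, Nat.sub_sub_self hj, Nat.choose_symm hj, zsmul_eq_mul, nsmul_eq_mul,
    Nat.cast_sub hj]
  push_cast
  ring

def alternatingChooseDiff (m j : ℕ) : ℤ :=
  (-1) ^ j * ((m.choose j : ℤ) - if j = 0 then 0 else (m.choose (j - 1) : ℤ))

theorem sum_alternatingChooseDiff_mul (m : ℕ) (f : ℕ → ℤ) :
    ∑ j ∈ range (m + 2), alternatingChooseDiff m j * f j =
      ∑ j ∈ range (m + 1), (-1) ^ j * (m.choose j : ℤ) * (f j + f (j + 1)) := by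
  have hleft : ∑ j ∈ range (m + 2), (-1) ^ j * (m.choose j : ℤ) * f j =
      ∑ j ∈ range (m + 1), (-1) ^ j * (m.choose j : ℤ) * f j := by
    simp [sum_range_succ _ (m + 1), Nat.choose_succ_self]
  have hright : ∑ j ∈ range (m + 2),
      (-1) ^ j * (if j = 0 then 0 else (m.choose (j - 1) : ℤ)) * f j =
      -∑ j ∈ range (m + 1), (-1) ^ j * (m.choose j : ℤ) * f (j + 1) := by
    simp [sum_range_succ' _ (m + 1), pow_succ]
  simp only [alternatingChooseDiff, mul_sub, sub_mul, sum_sub_distrib, hleft, hright, mul_add,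
    sum_add_distrib]
  ring

theorem sum_alternatingChooseDiff_mul_sub_pow {m k : ℕ} (hk : k < m) (c : ℤ) :
    ∑ j ∈ range (m + 2), alternatingChooseDiff m j * (c - j) ^ k = 0 := by
  rw [sum_alternatingChooseDiff_mul m (fun j => (c - j) ^ k)]
  simp only [mul_add, sum_add_distrib, Nat.cast_succ, sub_add_eq_sub_sub_swap,
    sum_range_neg_one_pow_mul_choose_mul_sub_pow hk, add_zero]

theorem alternatingChooseDiff_reflect {m j : ℕ} (hm : Even m) (hj : j ≤ m + 1) :
    alternatingChooseDiff m (m + 1 - j) = alternatingChooseDiff m j := by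
  rcases j with _ | i
  · simp [alternatingChooseDiff, Nat.choose_succ_self, hm.neg_one_pow, pow_succ]
  · have hi : i ≤ m := by omega
    have hsign : (-1 : ℤ) ^ (m - i) = (-1) ^ i := by
      rcases Nat.even_or_odd i with h | h
      · rw [h.neg_one_pow, ((Nat.even_sub hi).2 (iff_of_true hm h)).neg_one_pow]
      · rw [h.neg_one_pow, (Nat.Even.sub_odd hi hm h).neg_one_pow]
    have hnext : (if m - i = 0 then 0 else (m.choose (m - i - 1) : ℤ)) = m.choose (i + 1) := by
      split_ifs with h
      · rw [Nat.choose_eq_zero_of_lt (by omega), Nat.cast_zero]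
      · rw [show m - i - 1 = m - (i + 1) by omega, Nat.choose_symm (by omega)]
    simp only [alternatingChooseDiff, Nat.add_sub_add_right, hnext, Nat.choose_symm hi, hsign,
      Nat.succ_ne_zero, if_false, Nat.add_sub_cancel, pow_succ]
    ring

noncomputable def descProd (p : ℕ) : ℤ[X] := ∏ i ∈ range (p - 1), (X - C ((i : ℤ) + 1))

theorem map_descProd_zmod (p : ℕ) [Fact p.Prime] :
    (descProd p).map (Int.castRingHom (ZMod p)) = X ^ (p - 1) - 1 := by
  have hp := (Fact.out : p.Prime).one_lt
  have hprod : (descProd p).map (Int.castRingHom (ZMod p)) =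
      ∏ i ∈ range (p - 1), (X - C (((i + 1 : ℕ) : ZMod p))) := by
    simp [descProd, Polynomial.map_prod]
  have hmonic : (∏ i ∈ range (p - 1), (X - C (((i + 1 : ℕ) : ZMod p)))).Monic :=
    monic_prod_of_monic _ _ fun i _ => monic_X_sub_C _
  have hdeg : (∏ i ∈ range (p - 1), (X - C (((i + 1 : ℕ) : ZMod p)))).degree =
      ((p - 1 : ℕ) : WithBot ℕ) := by
    rw [degree_eq_natDegree hmonic.ne_zero,
      natDegree_prod_of_monic _ _ fun i _ => monic_X_sub_C _]
    simp only [natDegree_X_sub_C, sum_const, card_range, smul_eq_mul, mul_one]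
  have hmonic' : (X ^ (p - 1) - 1 : (ZMod p)[X]).Monic := by
    simpa using monic_X_pow_sub_C (1 : ZMod p) (n := p - 1) (by omega)
  rw [hprod]
  -- both sides are monic of degree `p - 1` and vanish at `1, …, p - 1` (Fermat)
  refine eq_of_degree_le_of_eval_index_eq (v := fun i : ℕ => ((i + 1 : ℕ) : ZMod p))
    (range (p - 1)) ?_ ?_ ?_ ?_ ?_
  · intro i hi j hj hij
    have := congrArg ZMod.val hij
    simp only [mem_coe, mem_range] at hi hj
    rw [ZMod.val_natCast_of_lt (by omega), ZMod.val_natCast_of_lt (by omega)] at this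
    omega
  · rw [hdeg, card_range]
  · rw [hdeg, ← C_1, degree_X_pow_sub_C (by omega)]
  · rw [hmonic.leadingCoeff, hmonic'.leadingCoeff]
  · intro i hi
    rw [eval_prod, prod_eq_zero hi (by simp)]
    have hne : ((i + 1 : ℕ) : ZMod p) ≠ 0 := by
      rw [Ne, ZMod.natCast_eq_zero_iff]
      exact Nat.not_dvd_of_pos_of_lt (by omega) (by simp at hi; omega)
    rw [eval_sub, eval_pow, eval_X, eval_one, ZMod.pow_card_sub_one_eq_one hne, sub_self]

theorem prime_dvd_coeff_descProd {p k : ℕ} (hp : p.Prime) (hk0 : 0 < k) (hk : k < p - 1) :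
    (p : ℤ) ∣ (descProd p).coeff k := by
  have := Fact.mk hp
  rw [← ZMod.intCast_zmod_eq_zero_iff_dvd, ← eq_intCast (Int.castRingHom _), ← coeff_map,
    map_descProd_zmod]
  simp [coeff_X_pow, coeff_one, hk.ne, hk0.ne']

theorem eval_descProd_mul_natCast (p : ℕ) {m : ℕ} (hm : 1 ≤ m) :
    (descProd p).eval ((p : ℤ) * m) = (p - 1).factorial * ((m * p - 1).choose (p - 1) : ℤ) := by
  rw [← Nat.cast_mul (p - 1).factorial, ← Nat.descFactorial_eq_factorial_mul_choose,
    Nat.descFactorial_eq_prod_range, descProd, eval_prod, Nat.cast_prod]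
  refine prod_congr rfl fun i hi => ?_
  have hi : i < p - 1 := mem_range.mp hi
  have hmp : p ≤ m * p := Nat.le_mul_of_pos_left p hm
  rw [eval_sub, eval_X, eval_C, Nat.cast_sub (by omega), Nat.cast_sub (by omega)]
  push_cast
  ring

theorem eval_descProd_sub {p : ℕ} (hp : Odd p) (x : ℤ) :
    (descProd p).eval (p - x) = (descProd p).eval x := by
  rw [descProd, eval_prod, eval_prod, ← prod_range_reflect]
  have hreflect : ∀ i ∈ range (p - 1),
      eval (p - x) (X - C (((p - 1 - 1 - i : ℕ) : ℤ) + 1)) =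
        -eval x (X - C ((i : ℤ) + 1)) := by
    intro i hi
    have hi : i < p - 1 := mem_range.mp hi
    rw [eval_sub, eval_sub, eval_X, eval_X, eval_C, eval_C, Nat.cast_sub (by omega),
      Nat.cast_sub (by omega), Nat.cast_sub (by omega)]
    ring
  rw [prod_congr rfl hreflect, prod_neg, card_range, (Nat.Odd.sub_odd hp odd_one).neg_one_pow,
    one_mul]

theorem pow_succ_dvd_sum_mul_eval_mul {R ι : Type*} [CommRing R] (s : Finset ι) (w x : ι → R)
    (Q : R[X]) (a : R) (d : ℕ) (hmoment : ∀ k < d, ∑ j ∈ s, w j * x j ^ k = 0)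
    (hcoeff : a ∣ Q.coeff d) :
    a ^ (d + 1) ∣ ∑ j ∈ s, w j * Q.eval (a * x j) := by
  have hexpand : ∑ j ∈ s, w j * Q.eval (a * x j) =
      ∑ k ∈ range (Q.natDegree + 1), Q.coeff k * a ^ k * ∑ j ∈ s, w j * x j ^ k := by
    simp only [eval_eq_sum_range, mul_sum]
    rw [sum_comm]
    refine sum_congr rfl fun k _ => sum_congr rfl fun j _ => ?_
    ring
  rw [hexpand]
  refine dvd_sum fun k _ => ?_
  rcases lt_trichotomy k d with hlt | rfl | hgt
  · rw [hmoment k hlt, mul_zero]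
    exact dvd_zero _
  · exact Dvd.dvd.mul_right (pow_succ' a k ▸ mul_dvd_mul hcoeff dvd_rfl) _
  · exact Dvd.dvd.mul_right (Dvd.dvd.mul_left (pow_dvd_pow a hgt) _) _

theorem sum_range_add_self_of_reflect {M : Type*} [AddCommMonoid M] (f : ℕ → M) (m : ℕ)
    (h : ∀ j < m, f (m + j) = f (m - 1 - j)) :
    ∑ j ∈ range (m + m), f j = 2 • ∑ j ∈ range m, f j := by
  rw [sum_range_add, sum_congr rfl fun j hj => h j (mem_range.mp hj), sum_range_reflect, two_nsmul]

theorem sum_alternatingChooseDiff_mul_eval_descProd (n : ℕ) {p : ℕ} (hp : Odd p) :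
    ∑ j ∈ range (2 * n + 2),
        alternatingChooseDiff (2 * n) j * (descProd p).eval ((p : ℤ) * ((n : ℤ) + 1 - j)) =
      2 * ((p - 1).factorial * ∑ j ∈ range (n + 1),
        alternatingChooseDiff (2 * n) j * (((n + 1 - j) * p - 1).choose (p - 1) : ℤ)) := by
  rw [show 2 * n + 2 = (n + 1) + (n + 1) by ring,
    sum_range_add_self_of_reflect (M := ℤ) _ (n + 1), nsmul_eq_mul, Nat.cast_ofNat]
  · congr 1
    rw [mul_sum]
    refine sum_congr rfl fun j hj => ?_
    have hj : j < n + 1 := mem_range.mp hj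
    rw [show (n : ℤ) + 1 - j = ((n + 1 - j : ℕ) : ℤ) by omega,
      eval_descProd_mul_natCast p (by omega)]
    ring
  · intro j hj
    have hj : j ≤ n := by omega
    have hweight :
        alternatingChooseDiff (2 * n) (n + 1 + j) = alternatingChooseDiff (2 * n) (n - j) := by
      rw [← alternatingChooseDiff_reflect (by simp) (by omega)]
      congr 1
      omega
    have harg : (p : ℤ) * ((n : ℤ) + 1 - (n + 1 + j : ℕ)) =
        p - p * ((n : ℤ) + 1 - (n - j : ℕ)) := by
      push_cast [Nat.cast_sub hj]
      ring
    rw [show n + 1 - 1 - j = n - j by omega, hweight, harg, eval_descProd_sub hp]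

theorem Nat.Prime.coprime_two_mul_factorial_pred {p : ℕ} (hp : p.Prime) (h2 : 2 < p) :
    Nat.Coprime p (2 * (p - 1).factorial) := by
  refine (hp.coprime_iff_not_dvd).2 fun hdvd => ?_
  rcases (Nat.Prime.dvd_mul hp).1 hdvd with h | h
  · exact absurd (Nat.le_of_dvd two_pos h) (by omega)
  · exact absurd ((hp.dvd_factorial).1 h) (by omega)

theorem Nat.choose_mul_eq_mul_choose_pred (m : ℕ) {p : ℕ} (hp : 0 < p) :
    (m * p).choose p = m * (m * p - 1).choose (p - 1) := by
  rcases Nat.eq_zero_or_pos m with rfl | hm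
  · simp [Nat.choose_eq_zero_of_lt hp]
  obtain ⟨N, hN⟩ : ∃ N, m * p = N + 1 :=
    ⟨m * p - 1, by have := Nat.le_mul_of_pos_left p hm; omega⟩
  obtain ⟨q, rfl⟩ : ∃ q, p = q + 1 := ⟨p - 1, by omega⟩
  have h := Nat.add_one_mul_choose_eq N q
  rw [hN, Nat.add_sub_cancel, Nat.add_sub_cancel]
  apply Nat.eq_of_mul_eq_mul_right hp
  rw [← h, ← hN]
  ring

theorem stmt13 (n p : ℕ) (hn : 1 ≤ n) (hp : p.Prime) (h : 2*n + 1 < p) :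
    ∃ k : ℤ,
      (∑ j ∈ Finset.range (n+1), (-1 : ℚ)^j *
          ((Nat.choose (2*n) j : ℚ) - (if j = 0 then 0 else (Nat.choose (2*n) (j-1) : ℚ))) *
          (Nat.choose ((n+1-j)*p) p : ℚ) / ((n : ℚ) + 1 - j))
        = (p : ℚ)^(2*n+1) * (k : ℚ) := by
  set S : ℤ := ∑ j ∈ range (n + 1),
    alternatingChooseDiff (2 * n) j * (((n + 1 - j) * p - 1).choose (p - 1) : ℤ) with hS
  have hfull : (p : ℤ) ^ (2 * n + 1) ∣ 2 * ((p - 1).factorial * S) := by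
    rw [← sum_alternatingChooseDiff_mul_eval_descProd n (hp.odd_of_ne_two (by omega : p ≠ 2))]
    exact pow_succ_dvd_sum_mul_eval_mul _ _ _ _ _ _
      (fun k hk => sum_alternatingChooseDiff_mul_sub_pow hk _)
      (prime_dvd_coeff_descProd hp (by omega) (by omega))
  have hcop : IsCoprime ((p : ℤ) ^ (2 * n + 1)) ((2 * (p - 1).factorial : ℕ) : ℤ) :=
    (Nat.isCoprime_iff_coprime.2 (hp.coprime_two_mul_factorial_pred (by omega))).pow_left
  obtain ⟨k, hk⟩ := hcop.dvd_of_dvd_mul_left (by push_cast; rwa [← mul_assoc] at hfull)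
  refine ⟨k, ?_⟩
  rw [← Int.cast_natCast p, ← Int.cast_pow, ← Int.cast_mul, ← hk, hS, Int.cast_sum]
  refine sum_congr rfl fun j hj => ?_
  have hj : j < n + 1 := mem_range.mp hj
  have hcast : (n : ℚ) + 1 - j = ((n + 1 - j : ℕ) : ℚ) := by
    rw [Nat.cast_sub hj.le]; push_cast; ring
  rw [Nat.choose_mul_eq_mul_choose_pred _ hp.pos, hcast]
  have hm : ((n + 1 - j : ℕ) : ℚ) ≠ 0 := by exact_mod_cast (by omega : n + 1 - j ≠ 0)
  simp only [alternatingChooseDiff]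
  push_cast
  field_simp
end

section
/- For every integer n ≥ 1, the least positive integer L such that L * C(2n+1, n+1-i) * (2i-1) / ((2n+1) * i) is an integer for all i = 1, ..., n+1 equals lcm(1, 2, ..., 2n) * (2n+1) / C(2n+1, n). -/
/-!
With `c = C(2n+1, n)`, `a_i = i * C(n+i, i)` and `b_i = (2i-1) * C(n+1, i)`, the identity
`C(2n+1, n+1-i) * C(n+i, i) = c * C(n+1, i)` gives `t_i = c * b_i / ((2n+1) * a_i)`. Hence
`D = lcm(1..2n) * (2n+1) / c` turns `t_i` into `lcm(1..2n) * b_i / a_i`, an integer because Kummer's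
theorem bounds `v_p (k * C(M, k))` by `log_p M`. It is the least such multiplier because for every
prime `p` one of these integers is prime to `p`, i.e. some `i ≤ n+1` has `p ^ ⌊log_p 2n⌋ ∣ a_i` and
`p ∤ b_i`. For `p > 2n` take `i = 1`; otherwise `i` is `n+1` with its lowest `p`-adic digits
cleared, chosen so that at every level up to `⌊log_p 2n⌋` either that power of `p` divides `i` or
adding `i` and `n` carries.
-/

open Finset

namespace Nat

variable {p : ℕ}

theorem factorization_mul_choose (hp : p.Prime) {n k b : ℕ} (hk : 0 < k) (hkn : k ≤ n)
    (hnb : log p n < b) :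
    (k * n.choose k).factorization p =
      #{i ∈ Ico 1 b | p ^ i ∣ k ∨ p ^ i ≤ k % p ^ i + (n - k) % p ^ i} := by
  have hdisj : Disjoint {i ∈ Ico 1 b | p ^ i ∣ k}
      {i ∈ Ico 1 b | p ^ i ≤ k % p ^ i + (n - k) % p ^ i} := by
    simp only [disjoint_right, mem_filter, mem_Ico, dvd_iff_mod_eq_zero]
    rintro i ⟨-, hcarry⟩ ⟨-, hmod⟩
    have := mod_lt (n - k) (pow_pos hp.pos i)
    omega
  rw [factorization_mul hk.ne' (choose_pos hkn).ne', Finsupp.add_apply,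
    factorization_eq_card_pow_dvd_of_lt hp hk (hkn.trans_lt (lt_pow_of_log_lt hp.one_lt hnb)),
    factorization_choose hp hkn hnb, filter_or, card_union_of_disjoint hdisj]

theorem mul_choose_dvd_lcmUpto {n k : ℕ} (hk : 0 < k) (hkn : k ≤ n) :
    k * n.choose k ∣ lcmUpto n := by
  rw [← factorization_prime_le_iff_dvd (by positivity [choose_pos hkn]) (lcmUpto_ne_zero n)]
  intro p hp
  rw [factorization_lcmUpto n hp, factorization_mul_choose hp hk hkn (lt_add_one _)]
  exact (card_filter_le ..).trans_eq (by simp)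

theorem pow_dvd_mul_choose (hp : p.Prime) {n k e : ℕ} (hk : 0 < k) (hkn : k ≤ n)
    (h : ∀ i ∈ Icc 1 e, p ^ i ∣ k ∨ p ^ i ≤ k % p ^ i + (n - k) % p ^ i) :
    p ^ e ∣ k * n.choose k := by
  rw [hp.pow_dvd_iff_le_factorization (by positivity [choose_pos hkn]),
    factorization_mul_choose hp hk hkn (b := max (log p n) e + 1) (by omega)]
  calc e = #(Icc 1 e) := by simp
    _ ≤ _ := card_le_card fun i hi ↦ mem_filter.2
      ⟨by simp only [mem_Icc, mem_Ico] at hi ⊢; omega, h i hi⟩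

theorem not_pow_log_succ_dvd_lcmUpto (hp : p.Prime) (N : ℕ) :
    ¬ p ^ (log p N + 1) ∣ lcmUpto N := by
  rw [hp.pow_dvd_iff_le_factorization (lcmUpto_ne_zero N), factorization_lcmUpto N hp]
  omega

theorem dvd_of_forall_prime_exists_not_dvd {d m : ℕ}
    (h : ∀ p, p.Prime → ∃ k, ¬ p ∣ k ∧ d ∣ m * k) : d ∣ m := by
  refine (dvd_iff_prime_pow_dvd_dvd m d).2 fun p a hp hpa ↦ ?_
  obtain ⟨k, hpk, hdk⟩ := h p hp
  exact (Coprime.pow_left a (hp.coprime_iff_not_dvd.2 hpk)).dvd_of_dvd_mul_right (hpa.trans hdk)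

theorem not_dvd_of_mul_eq (hp : p.Prime) {e a b c q : ℕ} (h : a * q = c * b) (ha : p ^ e ∣ a)
    (hb : ¬ p ∣ b) (hc : ¬ p ^ (e + 1) ∣ c) : ¬ p ∣ q := fun hq ↦
  hc <| (Coprime.pow_left _ (hp.coprime_iff_not_dvd.2 hb)).dvd_of_dvd_mul_right
    (h ▸ pow_succ p e ▸ mul_dvd_mul ha hq)

theorem mod_le_mod_of_dvd {a b : ℕ} (m : ℕ) (h : a ∣ b) : m % a ≤ m % b := by
  rw [← mod_mod_of_dvd m h]
  exact mod_le _ _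

theorem sub_mod_mod_of_dvd {a b : ℕ} (m : ℕ) (hb : 0 < b) (h : a ∣ b) :
    (m - m % a) % b = m % b - m % a := by
  have := mod_le_mod_of_dvd m h
  have hm : m - m % a = b * (m / b) + (m % b - m % a) := by
    have := div_add_mod m b
    omega
  rw [hm, mul_add_mod, mod_eq_of_lt (by have := mod_lt m hb; omega)]

theorem not_dvd_choose_mod_pow (hp : p.Prime) (m j : ℕ) : ¬ p ∣ m.choose (m % p ^ j) := by
  have hzero : (m.choose (m % p ^ j)).factorization p = 0 := by
    rw [factorization_choose hp (mod_le _ _) (lt_add_one _), Finset.card_eq_zero,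
      filter_eq_empty_iff]
    intro t _
    have hpt := pow_pos hp.pos t
    rcases le_total t j with htj | hjt
    · have hdvd : p ^ t ∣ m - m % p ^ j := (pow_dvd_pow p htj).trans (dvd_sub_mod m)
      rw [(dvd_iff_mod_eq_zero ..).1 hdvd]
      exact not_le.2 (mod_lt _ hpt)
    · have hdvd := pow_dvd_pow p hjt
      rw [mod_eq_of_lt ((mod_lt m (pow_pos hp.pos j)).trans_le (le_of_dvd hpt hdvd)),
        sub_mod_mod_of_dvd m hpt hdvd]
      have := mod_le_mod_of_dvd m hdvd
      have := mod_lt m hpt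
      omega
  simpa [factorization_eq_zero_iff, hp, (choose_pos (mod_le m _)).ne'] using hzero

/-- Write `m % p^(t+1) = m % p^t + p^t * d`. The quantity `2 * (m % p^t) - p^t` is unchanged from
level `t` to `t+1` iff `2d + 1 = p`, becomes negative if `2d + 1 < p`, and is at least
`2 * (m % p^t)` if `2d + 1 > p`. -/
theorem pow_succ_add_mod_lt_of_ne (hp : 0 < p) {m t : ℕ}
    (hne : 2 * (m % p ^ (t + 1)) + p ^ t ≠ 2 * (m % p ^ t) + p ^ (t + 1))
    (hpos : p ^ (t + 1) < 2 * (m % p ^ (t + 1))) :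
    p ^ (t + 1) + m % p ^ t < 2 * (m % p ^ (t + 1)) := by
  rw [mod_pow_succ, pow_succ] at *
  have hd : m / p ^ t % p < p := mod_lt _ hp
  have hr : m % p ^ t < p ^ t := mod_lt _ (pow_pos hp t)
  generalize m % p ^ t = r at *
  generalize m / p ^ t % p = d at *
  generalize p ^ t = P at *
  rcases lt_trichotomy (2 * d + 1) p with h | rfl | h
  · nlinarith
  · exact absurd (by ring) hne
  · nlinarith

/-- `j` is the last level below `e` at which `2 * ((n+1) % p^j) - p^j` differs from its value
`2(n+1) - p^e ≥ 2` at level `e`; adding `n` and `n+1` with its `j` lowest digits cleared then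
carries at every level above `j`. -/
theorem exists_carry_index (hp : p.Prime) {n e : ℕ} (hlt : n + 1 < p ^ e) (hle : p ^ e ≤ 2 * n) :
    ∃ j, p ^ j ≤ n + 1 ∧
      (∀ t, j < t → t ≤ e → p ^ t + (n + 1) % p ^ j < 2 * ((n + 1) % p ^ t)) ∧
      (j = 0 → ¬ p ∣ 2 * n + 1) := by
  have hme : (n + 1) % p ^ e = n + 1 := mod_eq_of_lt hlt
  let P : ℕ → Prop := fun j ↦ 2 * ((n + 1) % p ^ j) + p ^ e ≠ 2 * (n + 1) + p ^ j
  have hP0 : P 0 := by simp only [P, pow_zero, mod_one]; omega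
  have hPj : P (findGreatest P e) := findGreatest_spec (zero_le e) hP0
  have habove : ∀ t, findGreatest P e < t → t ≤ e →
      2 * ((n + 1) % p ^ t) + p ^ e = 2 * (n + 1) + p ^ t :=
    fun t h1 h2 ↦ not_not.1 (findGreatest_is_greatest h1 h2)
  have hje : findGreatest P e < e :=
    (findGreatest_le e).lt_of_ne fun h ↦ hPj (by rw [h, hme])
  generalize findGreatest P e = j at *
  have hnext := habove (j + 1) j.lt_succ_self hje
  have hstep := pow_succ_add_mod_lt_of_ne hp.pos (m := n + 1) (t := j) (by omega) (by omega)
  refine ⟨j, ?_, fun t h1 h2 ↦ by have := habove t h1 h2; omega, ?_⟩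
  · have hsplit : p ^ (e - 1) * p = p ^ e := by rw [← pow_succ]; congr 1; omega
    have : p ^ j ≤ p ^ (e - 1) := Nat.pow_le_pow_right hp.pos (by omega)
    nlinarith [hp.two_le]
  · -- level 1 carries, so `2 * ((n+1) % p) - 1` lies strictly between `p` and `2p`
    rintro rfl hdvd
    have h1 := habove 1 (by omega) (by omega)
    rw [pow_one] at h1
    have hdiv := div_add_mod (n + 1) p
    have hrest : p ∣ 2 * ((n + 1) % p) - 1 - p := by
      have : 2 * n + 1 = 2 * (p * ((n + 1) / p)) + p + (2 * ((n + 1) % p) - 1 - p) := by omega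
      rw [this] at hdvd
      exact (Nat.dvd_add_right ⟨2 * ((n + 1) / p) + 1, by ring⟩).1 hdvd
    have := le_of_dvd (by omega) hrest
    have := mod_lt (n + 1) hp.pos
    omega

theorem add_one_mul_choose_two_mul_add_one (n : ℕ) :
    (n + 1) * (2 * n + 1).choose n = (2 * n + 1) * (2 * n).choose n := by
  rw [add_one_mul_choose_eq, mul_comm,
    choose_symm_of_eq_add (show 2 * n + 1 = n + (n + 1) by omega)]

theorem choose_sub_mul_choose_add {n i : ℕ} (hi : i ≤ n + 1) :
    (2 * n + 1).choose (n + 1 - i) * (n + i).choose i =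
      (2 * n + 1).choose n * (n + 1).choose i := by
  rw [choose_symm_of_eq_add (show 2 * n + 1 = (n + 1 - i) + (n + i) by omega),
    choose_mul (le_add_left i n), choose_symm_of_eq_add (show 2 * n + 1 = n + (n + 1) by omega),
    choose_mul hi, add_tsub_cancel_right,
    choose_symm_of_eq_add (show 2 * n + 1 - i = n + (n + 1 - i) by omega)]

end Nat

open Nat

theorem isLeast_of_mul_eq_natCast {ι : Type*} (S : Finset ι) (t : ι → ℚ) (D : ℕ) (q : ι → ℕ)
    (hq : ∀ i ∈ S, (D : ℚ) * t i = q i) (hcop : ∀ p : ℕ, p.Prime → ∃ i ∈ S, ¬ p ∣ q i) :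
    IsLeast {L : ℕ | 0 < L ∧ ∀ i ∈ S, ∃ z : ℤ, (L : ℚ) * t i = z} D := by
  refine ⟨⟨?_, fun i hi ↦ ⟨q i, by rw [hq i hi]; norm_cast⟩⟩, fun L ⟨hL, hLt⟩ ↦ le_of_dvd hL ?_⟩
  · obtain ⟨i, hi, h2⟩ := hcop 2 prime_two
    refine Nat.pos_of_ne_zero fun hD ↦ h2 ?_
    have := hq i hi
    rw [hD, Nat.cast_zero, zero_mul, eq_comm, Nat.cast_eq_zero] at this
    exact this ▸ dvd_zero 2
  · refine dvd_of_forall_prime_exists_not_dvd fun p hp ↦ ?_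
    obtain ⟨i, hi, hpq⟩ := hcop p hp
    obtain ⟨z, hz⟩ := hLt i hi
    refine ⟨q i, hpq, Int.natCast_dvd_natCast.1 ⟨z, ?_⟩⟩
    have : ((L * q i : ℕ) : ℚ) = ((D * z : ℤ) : ℚ) := by
      push_cast
      rw [← hq i hi, ← hz]
      ring
    exact_mod_cast this

theorem exists_witness_of_index {p n e j : ℕ} (hp : p.Prime) (hj : p ^ j ≤ n + 1)
    (hcarry : ∀ t, j < t → t ≤ e → p ^ t + (n + 1) % p ^ j < 2 * ((n + 1) % p ^ t))
    (hodd : j = 0 → ¬ p ∣ 2 * n + 1) :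
    ∃ i ∈ Icc 1 (n + 1), p ^ e ∣ i * (n + i).choose i ∧ ¬ p ∣ (2 * i - 1) * (n + 1).choose i := by
  obtain ⟨i, hi⟩ : ∃ i, i = n + 1 - (n + 1) % p ^ j := ⟨_, rfl⟩
  have hr := mod_lt (n + 1) (pow_pos hp.pos j)
  have hdvd : p ^ j ∣ i := hi ▸ dvd_sub_mod _
  have hi1 : 1 ≤ i := by generalize (n + 1) % p ^ j = r at hr hi; omega
  have hin : i ≤ n + 1 := hi ▸ sub_le _ _
  refine ⟨i, mem_Icc.2 ⟨hi1, hin⟩, ?_, ?_⟩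
  · refine pow_dvd_mul_choose hp hi1 (le_add_left i n) fun t ht ↦ ?_
    rw [mem_Icc] at ht
    rcases le_or_gt t j with htj | hjt
    · exact .inl ((pow_dvd_pow p htj).trans hdvd)
    · right
      have hpt : 1 < p ^ t := one_lt_pow (by omega) hp.one_lt
      have hc := hcarry t hjt ht.2
      have hsucc := add_mod_eq_ite (m := n) (n := 1) (k := p ^ t)
      rw [mod_eq_of_lt hpt] at hsucc
      rw [hi, sub_mod_mod_of_dvd _ (by omega) (pow_dvd_pow p hjt.le), add_tsub_cancel_right]
      split_ifs at hsucc <;> omega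
  · rw [hp.dvd_mul, hi, choose_symm (mod_le _ _), ← hi]
    rintro (h | h)
    · rcases j.eq_zero_or_pos with rfl | hj0
      · rw [hi, pow_zero, mod_one, show 2 * (n + 1 - 0) - 1 = 2 * n + 1 by omega] at h
        exact hodd rfl h
      · have hpi : p ∣ 2 * i := dvd_mul_of_dvd_right ((dvd_pow_self p hj0.ne').trans hdvd) 2
        have h1 : 2 * i - (2 * i - 1) = 1 := by omega
        exact hp.one_lt.ne' (dvd_one.1 (h1 ▸ Nat.dvd_sub hpi h))
    · exact not_dvd_choose_mod_pow hp (n + 1) j h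

theorem exists_witness {p : ℕ} (hp : p.Prime) (n : ℕ) :
    ∃ i ∈ Icc 1 (n + 1), p ^ log p (2 * n) ∣ i * (n + i).choose i ∧
      ¬ p ∣ (2 * i - 1) * (n + 1).choose i := by
  rcases (log p (2 * n)).eq_zero_or_pos with he | he
  · have h2n : 2 * n < p := (log_eq_zero_iff.1 he).resolve_right hp.one_lt.not_ge
    refine ⟨1, by simp, by simp [he], ?_⟩
    simpa using Nat.not_dvd_of_pos_of_lt (by omega) (by have := hp.two_le; omega : n + 1 < p)
  rcases le_or_gt (p ^ log p (2 * n)) (n + 1) with hle | hlt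
  · exact exists_witness_of_index hp hle (fun t h1 h2 ↦ by omega) (by omega)
  · obtain ⟨j, hj, hcarry, hodd⟩ := exists_carry_index hp hlt
      (pow_log_le_self p fun h ↦ by simp [h] at he)
    exact exists_witness_of_index hp hj hcarry hodd

theorem choose_dvd_lcmUpto_mul (n : ℕ) : (2 * n + 1).choose n ∣ lcmUpto (2 * n) * (2 * n + 1) := by
  refine (dvd_mul_left _ (n + 1)).trans ?_
  rw [add_one_mul_choose_two_mul_add_one, mul_comm (lcmUpto _)]
  exact mul_dvd_mul_left _ (Chebyshev.choose_dvd_lcmUpto (by omega))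

theorem mul_choose_dvd_lcmUpto_mul {n i : ℕ} (hi : i ∈ Finset.Icc 1 (n + 1)) :
    i * (n + i).choose i ∣ lcmUpto (2 * n) * ((2 * i - 1) * (n + 1).choose i) := by
  rw [Finset.mem_Icc] at hi
  rcases hi.2.lt_or_eq with hlt | rfl
  · exact ((mul_choose_dvd_lcmUpto hi.1 (le_add_left i n)).trans
      (Finset.lcm_mono (Finset.Icc_subset_Icc_right (by omega)))).mul_right _
  · rw [show n + (n + 1) = 2 * n + 1 by omega, choose_self, mul_one,
      choose_symm_of_eq_add (show 2 * n + 1 = (n + 1) + n by omega),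
      add_one_mul_choose_two_mul_add_one, show 2 * (n + 1) - 1 = 2 * n + 1 by omega,
      mul_comm (lcmUpto _)]
    exact mul_dvd_mul_left _ (Chebyshev.choose_dvd_lcmUpto (by omega))

def coeff (n i : ℕ) : ℚ :=
  ((2 * n + 1).choose (n + 1 - i) : ℚ) * (2 * (i : ℚ) - 1) / ((2 * (n : ℚ) + 1) * i)

theorem natCast_mul_coeff {n i D Lc q : ℕ} (hi : i ∈ Finset.Icc 1 (n + 1))
    (hD : Lc * (2 * n + 1) = (2 * n + 1).choose n * D)
    (hq : i * (n + i).choose i * q = Lc * ((2 * i - 1) * (n + 1).choose i)) :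
    (D : ℚ) * coeff n i = q := by
  rw [Finset.mem_Icc] at hi
  have key := choose_sub_mul_choose_add hi.2
  have hi0 : (i : ℚ) ≠ 0 := by exact_mod_cast (show i ≠ 0 by omega)
  have hB : ((n + i).choose i : ℚ) ≠ 0 := by exact_mod_cast (choose_pos (le_add_left i n)).ne'
  have hc : ((2 * n + 1).choose n : ℚ) ≠ 0 := by exact_mod_cast (choose_pos (by omega)).ne'
  rw [coeff, mul_div_assoc', div_eq_iff (mul_ne_zero (by positivity) hi0)]
  refine mul_right_cancel₀ (b := (i * (n + i).choose i * (2 * n + 1).choose n : ℚ))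
    (mul_ne_zero (mul_ne_zero hi0 hB) hc) ?_
  qify [show 1 ≤ 2 * i by omega] at key hD hq
  linear_combination (2 * (i : ℚ) - 1) * i * Lc * (2 * n + 1) * key
    - (2 * (i : ℚ) - 1) * i * ((2 * n + 1).choose (n + 1 - i)) * ((n + i).choose i) * hD
    - (2 * (n : ℚ) + 1) * i * ((2 * n + 1).choose n) * hq

theorem stmt19_general (n : ℕ) :
    IsLeast {L : ℕ | 0 < L ∧ ∀ i ∈ Finset.Icc 1 (n+1), ∃ z : ℤ,
        (L : ℚ) * (Nat.choose (2*n+1) (n+1-i) : ℚ) * (2*(i : ℚ) - 1) / ((2*(n : ℚ)+1) * i) = (z : ℚ)}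
      ((Finset.Icc 1 (2*n)).lcm id * (2*n+1) / Nat.choose (2*n+1) n) := by
  obtain ⟨D, hD⟩ := choose_dvd_lcmUpto_mul n
  have hq i (hi : i ∈ Finset.Icc 1 (n + 1)) :=
    Nat.mul_div_cancel' (mul_choose_dvd_lcmUpto_mul hi)
  convert isLeast_of_mul_eq_natCast (Finset.Icc 1 (n + 1)) (coeff n) D _
      (fun i hi ↦ natCast_mul_coeff hi hD (hq i hi)) (fun p hp ↦ ?_) using 1
  · simp only [coeff, mul_div_assoc, mul_assoc]
  · exact (congrArg (· / _) hD).trans (Nat.mul_div_cancel_left _ (choose_pos (by omega)))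
  · obtain ⟨i, hi, hpow, hndvd⟩ := exists_witness hp n
    exact ⟨i, hi, not_dvd_of_mul_eq hp (hq i hi) hpow hndvd (not_pow_log_succ_dvd_lcmUpto hp _)⟩

theorem stmt19 (n : ℕ) (hn : 1 ≤ n) :
    IsLeast {L : ℕ | 0 < L ∧ ∀ i ∈ Finset.Icc 1 (n+1), ∃ z : ℤ,
        (L : ℚ) * (Nat.choose (2*n+1) (n+1-i) : ℚ) * (2*(i : ℚ) - 1) / ((2*(n : ℚ)+1) * i) = (z : ℚ)}
      ((Finset.Icc 1 (2*n)).lcm id * (2*n+1) / Nat.choose (2*n+1) n) :=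
  stmt19_general n
end
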